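/- arXiv:1510.06278 — 10 statements merged into one kernel-verified Lean document; each statement's English description precedes it below -/
import Mathlib

section
/- Let D be a nonprincipal ultrafilter on an infinite cardinal κ, let J_* be a λ⁺-saturated dense linear order without endpoints, and let J be a linear order containing J_* such that J_* is dense in J (between any two distinct elements of J there is an element of J_*). Suppose θ and σ are infinite cardinals with θ, σ ≤ λ, and the sequences ⟨f_α : α < θ⟩ and ⟨g_β : β < σ⟩ of functions from κ to J_* represent a (θ, σ)-cut of J_*^κ/D. Then there is no h : κ → J with f_α <_D h <_D g_β for all α < θ and β < σ; that is, the cut is not filled in J^κ/D. -/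
open Cardinal Set

/-- `f <_D g` : the set of coordinates where `f i < g i` belongs to the ultrafilter `D`. -/
def ltD {ι J : Type} [LinearOrder J] (D : Ultrafilter ι) (f g : ι → J) : Prop :=
  {i | f i < g i} ∈ D

/-- An ultrafilter is nonprincipal iff it contains the complement of every singleton. -/
def Nonprincipal {ι : Type} (D : Ultrafilter ι) : Prop :=
  ∀ i : ι, ({i}ᶜ : Set ι) ∈ D

/-- `μ`-completeness: any intersection of fewer than `μ` members of `D` belongs to `D`. -/
def IsCompleteUF (μ : Cardinal) {ι : Type} (D : Ultrafilter ι) : Prop :=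
  ∀ s : Set (Set ι), #s < μ → (∀ A ∈ s, A ∈ D) → ⋂₀ s ∈ D

/-- A uniform ultrafilter: every member has full cardinality. -/
def IsUniformUF {ι : Type} (D : Ultrafilter ι) : Prop :=
  ∀ A ∈ D, #A = #ι

/-- The sequences `f` (indexed by `T₁`) and `g` (indexed by `T₂`) represent a
`(T₁, T₂)`-cut of the ultrapower `J^ι/D`: `f` is `<_D`-increasing, `g` is `<_D`-decreasing,
every `f a` is `<_D`-below every `g b`, and no element fills the cut. -/
def RepCut {ι J : Type} [LinearOrder J] {T₁ T₂ : Type} [LinearOrder T₁] [LinearOrder T₂]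
    (D : Ultrafilter ι) (f : T₁ → ι → J) (g : T₂ → ι → J) : Prop :=
  (∀ a b : T₁, a < b → ltD D (f a) (f b)) ∧
  (∀ a b : T₂, a < b → ltD D (g b) (g a)) ∧
  (∀ (a : T₁) (b : T₂), ltD D (f a) (g b)) ∧
  ¬∃ h : ι → J, (∀ a : T₁, ltD D (f a) h) ∧ ∀ b : T₂, ltD D h (g b)

/-- `τ⁺`-saturation of a dense linear order: any two sets of size `≤ τ`, one entirely
below the other, can be separated by a point. -/
def SatPlus (τ : Cardinal) (J : Type) [LinearOrder J] : Prop :=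
  ∀ A B : Set J, #A ≤ τ → #B ≤ τ → (∀ a ∈ A, ∀ b ∈ B, a < b) →
    ∃ t : J, (∀ a ∈ A, a < t) ∧ ∀ b ∈ B, t < b

/- Pointwise: at each coordinate `i`, the values `f α i` lying below `h i` and the values
`g β i` lying above `h i` are at most `λ` points of `J_*`, so saturation puts a point `t i`
of `J_*` between them. Every `<_D`-relation between `h` and the sequences then transfers to
`t : κ → J_*`, which would fill the cut in `J_*^κ/D`. -/

theorem ltD.mono {ι J : Type} [LinearOrder J] {D : Ultrafilter ι} {f g f' g' : ι → J}
    (hfg : ltD D f g) (himp : ∀ i, f i < g i → f' i < g' i) : ltD D f' g' :=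
  Filter.mem_of_superset hfg himp

theorem exists_mem_separating_of_sat {J : Type} [LinearOrder J] {S : Set J} {lam : Cardinal}
    (hsat : ∀ A B : Set J, A ⊆ S → B ⊆ S → #A ≤ lam → #B ≤ lam →
      (∀ a ∈ A, ∀ b ∈ B, a < b) → ∃ t ∈ S, (∀ a ∈ A, a < t) ∧ ∀ b ∈ B, t < b)
    {T₁ T₂ : Type} (u : T₁ → J) (v : T₂ → J) (huS : ∀ a, u a ∈ S) (hvS : ∀ b, v b ∈ S)
    (hT₁ : #T₁ ≤ lam) (hT₂ : #T₂ ≤ lam) (x : J) :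
    ∃ t ∈ S, (∀ a, u a < x → u a < t) ∧ ∀ b, x < v b → t < v b := by
  obtain ⟨t, htS, hlow, hupp⟩ := hsat (u '' {a | u a < x}) (v '' {b | x < v b})
    (image_subset_iff.2 fun a _ => huS a) (image_subset_iff.2 fun b _ => hvS b)
    (mk_image_le.trans <| (mk_set_le _).trans hT₁) (mk_image_le.trans <| (mk_set_le _).trans hT₂)
    (by rintro _ ⟨a, ha, rfl⟩ _ ⟨b, hb, rfl⟩; exact ha.trans hb)
  exact ⟨t, htS, fun a ha => hlow _ ⟨a, ha, rfl⟩, fun b hb => hupp _ ⟨b, hb, rfl⟩⟩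

theorem cut_not_filled_in_completion_general
    {ι : Type} (D : Ultrafilter ι)
    (lam : Cardinal) (J : Type) [LinearOrder J] (Jstar : Set J)
    (hsat : ∀ A B : Set J, A ⊆ Jstar → B ⊆ Jstar → #A ≤ lam → #B ≤ lam →
      (∀ a ∈ A, ∀ b ∈ B, a < b) →
      ∃ t ∈ Jstar, (∀ a ∈ A, a < t) ∧ ∀ b ∈ B, t < b)
    (θ σ : Cardinal) (hθlam : θ ≤ lam) (hσlam : σ ≤ lam)
    (f : θ.ord.ToType → ι → J) (g : σ.ord.ToType → ι → J)
    (hfJ : ∀ a i, f a i ∈ Jstar) (hgJ : ∀ b i, g b i ∈ Jstar)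
    (hnofillstar : ¬∃ h : ι → J, (∀ i, h i ∈ Jstar) ∧
      (∀ a, ltD D (f a) h) ∧ ∀ b, ltD D h (g b)) :
    ¬∃ h : ι → J, (∀ a, ltD D (f a) h) ∧ ∀ b, ltD D h (g b) := by
  rintro ⟨h, hf, hg⟩
  choose t htJ hft htg using fun i =>
    exists_mem_separating_of_sat hsat (f · i) (g · i) (hfJ · i) (hgJ · i)
      (by rwa [mk_ord_toType]) (by rwa [mk_ord_toType]) (h i)
  exact hnofillstar
    ⟨t, htJ, fun a => (hf a).mono fun i => hft i a, fun b => (hg b).mono fun i => htg i b⟩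

/-- a cut of `J_*^κ/D` with both cofinalities `≤ λ`, where `J_*` is a
`λ⁺`-saturated dense linear order without endpoints sitting densely inside the linear
order `J`, is not filled in `J^κ/D`. -/
theorem cut_not_filled_in_completion
    {ι : Type} [Infinite ι] (D : Ultrafilter ι) (hD : Nonprincipal D)
    (lam : Cardinal) (J : Type) [LinearOrder J] (Jstar : Set J)
    (hne : Jstar.Nonempty)
    (hdense : ∀ a ∈ Jstar, ∀ b ∈ Jstar, a < b → ∃ c ∈ Jstar, a < c ∧ c < b)
    (hnomin : ∀ a ∈ Jstar, ∃ b ∈ Jstar, b < a)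
    (hnomax : ∀ a ∈ Jstar, ∃ b ∈ Jstar, a < b)
    (hsat : ∀ A B : Set J, A ⊆ Jstar → B ⊆ Jstar → #A ≤ lam → #B ≤ lam →
      (∀ a ∈ A, ∀ b ∈ B, a < b) →
      ∃ t ∈ Jstar, (∀ a ∈ A, a < t) ∧ ∀ b ∈ B, t < b)
    (hJdense : ∀ a b : J, a < b → ∃ s ∈ Jstar, a < s ∧ s < b)
    (θ σ : Cardinal) (hθ : ℵ₀ ≤ θ) (hσ : ℵ₀ ≤ σ) (hθlam : θ ≤ lam) (hσlam : σ ≤ lam)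
    (f : θ.ord.ToType → ι → J) (g : σ.ord.ToType → ι → J)
    (hfJ : ∀ a i, f a i ∈ Jstar) (hgJ : ∀ b i, g b i ∈ Jstar)
    (hinc : ∀ a b, a < b → ltD D (f a) (f b))
    (hdec : ∀ a b, a < b → ltD D (g b) (g a))
    (hbet : ∀ a b, ltD D (f a) (g b))
    (hnofillstar : ¬∃ h : ι → J, (∀ i, h i ∈ Jstar) ∧
      (∀ a, ltD D (f a) h) ∧ ∀ b, ltD D h (g b)) :
    ¬∃ h : ι → J, (∀ a, ltD D (f a) h) ∧ ∀ b, ltD D h (g b) :=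
  cut_not_filled_in_completion_general D lam J Jstar hsat θ σ hθlam hσlam f g hfJ hgJ hnofillstar
end

section
/- Suppose κ₁ > ℵ₀ and D is a κ₁-complete but not κ₁⁺-complete nonprincipal ultrafilter on a cardinal κ₂. Let θ₁, θ₂ be regular cardinals, let J be a (θ₁+θ₂)⁺-saturated dense linear order without endpoints, and suppose some pair of sequences ⟨f_α : α < θ₁⟩, ⟨g_β : β < θ₂⟩ of functions from κ₂ to J represents a (θ₁, θ₂)-cut of J^{κ₂}/D. Then θ₁ > κ₁ and θ₂ > κ₁. -/
open Cardinal Set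

/-! A `κ₁`-complete ultrafilter that is not `κ₁⁺`-complete carries a function `r : ι → κ₁`
that is unbounded modulo `D` and minimal with this property; minimality (with countable
completeness making `<_D` well founded) forces `r` to push `D` forward to a normal ultrafilter,
i.e. `D` is closed under intersections diagonalised along `r`. If, say, `θ₁ ≤ κ₁`, fill the cut
coordinatewise: at `i` separate `{f a i : a < r i}` from those `g b i` lying above all of these,
using saturation. Unboundedness of `r` puts `h` above every `f a`, and the diagonal intersection
of the sets `{f a < g b}` puts it below every `g b`. The case `θ₂ ≤ κ₁` is the order dual. -/

open Function Ordinal OrderDual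

theorem toType_coe_injective (o : Ordinal) : Injective fun a : o.ToType => (a : Ordinal) :=
  fun _ _ h => ToType.mk.symm.injective (Subtype.ext h)

section Ultrafilter

variable {ι : Type} {D : Ultrafilter ι}

def UnboundedMod (D : Ultrafilter ι) (o : Ordinal) (r : ι → Ordinal) : Prop :=
  ∀ ε < o, {i | ε ≤ r i} ∈ D

/-- That is, the pushforward of `D` along `r` is a normal ultrafilter. -/
def HasDiagonalInter (D : Ultrafilter ι) (r : ι → Ordinal) : Prop :=
  ∀ T : Ordinal → Set ι, (∀ δ, T δ ∈ D) → {i | ∀ δ < r i, i ∈ T δ} ∈ D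

theorem UnboundedMod.lt_mem {o : Ordinal} (ho : Order.IsSuccLimit o) {r : ι → Ordinal}
    (hr : UnboundedMod D o r) {ε : Ordinal} (hε : ε < o) : {i | ε < r i} ∈ D := by
  filter_upwards [hr _ (ho.succ_lt hε)] with i hi using Order.succ_le_iff.1 hi

theorem IsCompleteUF.iInter_mem {κ : Cardinal} (hcomp : IsCompleteUF κ D) {β : Type}
    {s : β → Set ι} (hβ : #β < κ) (hs : ∀ b, s b ∈ D) : ⋂ b, s b ∈ D := by
  rw [← sInter_range]
  exact hcomp _ (mk_range_le.trans_lt hβ) (forall_mem_range.2 hs)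

theorem IsCompleteUF.setOf_forall_lt_mem {κ : Cardinal} (hcomp : IsCompleteUF κ D)
    {ε : Ordinal} (hε : ε < κ.ord) {T : Ordinal → Set ι} (hT : ∀ δ < ε, T δ ∈ D) :
    {i | ∀ δ < ε, i ∈ T δ} ∈ D := by
  have hε' : #ε.ToType < κ := by rwa [mk_toType, ← lt_ord]
  filter_upwards [hcomp.iInter_mem hε' fun a => hT a (ToType.toOrd a).2] with i hi δ hδ
  simpa using mem_iInter.1 hi (ToType.mk ⟨δ, hδ⟩)

theorem exists_family_of_not_isCompleteUF_succ {κ : Cardinal}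
    (hncomp : ¬IsCompleteUF (Order.succ κ) D) :
    ∃ A : Ordinal → Set ι, (∀ δ, A δ ∈ D) ∧ {i | ∀ δ < κ.ord, i ∈ A δ} ∉ D := by
  simp only [IsCompleteUF, not_forall] at hncomp
  obtain ⟨s, hs, hsD, hnot⟩ := hncomp
  obtain ⟨e⟩ : Nonempty (s ↪ κ.ord.ToType) := by
    rw [← le_def, mk_ord_toType]
    exact Order.lt_succ_iff.1 hs
  let ρ : s → Ordinal := fun t => e t
  have hρ : Injective ρ := (toType_coe_injective _).comp e.injective
  refine ⟨fun δ => ⋂ t ∈ ρ ⁻¹' {δ}, (t : Set ι),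
    fun δ => (Filter.biInter_mem' (subsingleton_singleton.preimage hρ)).2 fun t _ => hsD t t.2,
    fun hA => hnot ?_⟩
  filter_upwards [hA] with i hi t ht
  exact mem_iInter₂.1 (hi (ρ ⟨t, ht⟩) (ToType.toOrd (e ⟨t, ht⟩)).2) ⟨t, ht⟩ rfl

theorem exists_unboundedMod_of_not_mem {κ : Cardinal} (hcomp : IsCompleteUF κ D)
    {A : Ordinal → Set ι} (hA : ∀ δ, A δ ∈ D) (hnot : {i | ∀ δ < κ.ord, i ∈ A δ} ∉ D) :
    ∃ r, UnboundedMod D κ.ord r := by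
  refine ⟨fun i => sInf {δ | i ∉ A δ}, fun ε hε => ?_⟩
  filter_upwards [hcomp.setOf_forall_lt_mem hε fun δ _ => hA δ,
    Ultrafilter.compl_mem_iff_notMem.2 hnot] with i hin hout
  obtain ⟨δ, -, hδ⟩ : ∃ δ < κ.ord, i ∉ A δ := by simpa using hout
  exact le_csInf ⟨δ, hδ⟩ fun δ' hδ' => not_lt.1 fun h => hδ' (hin δ' h)

theorem wellFounded_lt_mod {α : Type*} [Preorder α] [WellFoundedLT α] {κ : Cardinal}
    (hκ : ℵ₀ < κ) (hcomp : IsCompleteUF κ D) :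
    WellFounded fun r s : ι → α => {i | r i < s i} ∈ D := by
  refine wellFounded_iff_isEmpty_descending_chain.2 ⟨fun ⟨u, hu⟩ => ?_⟩
  obtain ⟨i, hi⟩ := Ultrafilter.nonempty_of_mem (hcomp.iInter_mem (by rwa [mk_nat]) hu)
  obtain ⟨n, hn⟩ := WellFounded.not_rel_apply_succ (r := (· < ·)) fun n => u n i
  exact hn (mem_iInter.1 hi n)

/-- A pressing-down argument: a counterexample `T` yields a smaller unbounded function. -/
theorem hasDiagonalInter_of_minimal {κ : Cardinal} (hcomp : IsCompleteUF κ D)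
    {r : ι → Ordinal} (hmin : ∀ s, UnboundedMod D κ.ord s → {i | s i < r i} ∉ D) :
    HasDiagonalInter D r := by
  intro T hT
  by_contra hdiag
  have hbad : {i | ∃ δ < r i, i ∉ T δ} ∈ D := by
    simpa [compl_ofPred] using Ultrafilter.compl_mem_iff_notMem.2 hdiag
  let α : ι → Ordinal := fun i => sInf {δ | δ < r i ∧ i ∉ T δ}
  have hα : ∀ i ∈ {i | ∃ δ < r i, i ∉ T δ}, α i < r i ∧ i ∉ T (α i) :=
    fun i ⟨δ, hδ⟩ => csInf_mem (s := {δ | δ < r i ∧ i ∉ T δ}) ⟨δ, hδ⟩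
  obtain ⟨ε, hε, hαε⟩ : ∃ ε < κ.ord, {i | ε ≤ α i} ∉ D := by
    by_contra! hunb
    exact hmin α hunb (Filter.mem_of_superset hbad fun i hi => (hα i hi).1)
  have hαε' : {i | α i < ε} ∈ D := by
    simpa [compl_ofPred] using Ultrafilter.compl_mem_iff_notMem.2 hαε
  obtain ⟨i, hiε, hi, hiT⟩ := Ultrafilter.nonempty_of_mem
    (Filter.inter_mem hαε' (Filter.inter_mem hbad (hcomp.setOf_forall_lt_mem hε fun δ _ => hT δ)))
  exact (hα i hi).2 (hiT _ hiε)

theorem exists_unboundedMod_hasDiagonalInter {κ : Cardinal} (hκ : ℵ₀ < κ)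
    (hcomp : IsCompleteUF κ D) (hncomp : ¬IsCompleteUF (Order.succ κ) D) :
    ∃ r, UnboundedMod D κ.ord r ∧ HasDiagonalInter D r := by
  obtain ⟨A, hA, hnot⟩ := exists_family_of_not_isCompleteUF_succ hncomp
  obtain ⟨r₀, hr₀⟩ := exists_unboundedMod_of_not_mem hcomp hA hnot
  obtain ⟨r, hr, hmin⟩ :=
    (wellFounded_lt_mod hκ hcomp).has_min {r | UnboundedMod D κ.ord r} ⟨r₀, hr₀⟩
  exact ⟨r, hr, hasDiagonalInter_of_minimal hcomp hmin⟩

end Ultrafilter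

theorem SatPlus.dual {τ : Cardinal} {J : Type} [LinearOrder J] (hsat : SatPlus τ J) :
    SatPlus τ Jᵒᵈ := fun A B hA hB hAB =>
  let ⟨t, hBt, htA⟩ := hsat B A hB hA fun b hb a ha => hAB a ha b hb
  ⟨toDual t, htA, hBt⟩

theorem SatPlus.exists_fill {ι J T₁ T₂ : Type} [LinearOrder J] {τ : Cardinal}
    (hsat : SatPlus τ J) (h₁ : #T₁ ≤ τ) (h₂ : #T₂ ≤ τ) {D : Ultrafilter ι} {r : ι → Ordinal}
    (hdiag : HasDiagonalInter D r) {rk : T₁ → Ordinal} (hrk : Injective rk)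
    (hr : ∀ a, {i | rk a < r i} ∈ D) {f : T₁ → ι → J} {g : T₂ → ι → J}
    (hfg : ∀ a b, ltD D (f a) (g b)) :
    ∃ h : ι → J, (∀ a, ltD D (f a) h) ∧ ∀ b, ltD D h (g b) := by
  let A i := (fun a => f a i) '' {a | rk a < r i}
  let B i := (fun b => g b i) '' {b | ∀ a, rk a < r i → f a i < g b i}
  choose h hAh hhB using fun i => hsat (A i) (B i)
    (mk_image_le.trans ((mk_set_le _).trans h₁)) (mk_image_le.trans ((mk_set_le _).trans h₂))
    (by rintro _ ⟨a, ha, rfl⟩ _ ⟨b, hb, rfl⟩; exact hb a ha)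
  refine ⟨h, fun a => ?_, fun b => ?_⟩
  · filter_upwards [hr a] with i hi using hAh i _ (mem_image_of_mem _ hi)
  · have hT δ : ⋂ a ∈ rk ⁻¹' {δ}, {i | f a i < g b i} ∈ D :=
      (Filter.biInter_mem' (subsingleton_singleton.preimage hrk)).2 fun a _ => hfg a b
    filter_upwards [hdiag _ hT] with i hi
    exact hhB i _ ⟨b, fun a ha => mem_iInter₂.1 (hi _ ha) a rfl, rfl⟩

theorem cut_cofinalities_above_completeness_general
    {ι : Type} (κ₁ : Cardinal) (hκ₁ : ℵ₀ < κ₁)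
    (D : Ultrafilter ι)
    (hcomp : IsCompleteUF κ₁ D) (hncomp : ¬IsCompleteUF (Order.succ κ₁) D)
    (θ₁ θ₂ : Cardinal)
    (J : Type) [LinearOrder J]
    (hsat : SatPlus (θ₁ + θ₂) J)
    (f : θ₁.ord.ToType → ι → J) (g : θ₂.ord.ToType → ι → J)
    (hcut : RepCut D f g) :
    κ₁ < θ₁ ∧ κ₁ < θ₂ := by
  obtain ⟨-, -, hfg, hnofill⟩ := hcut
  obtain ⟨r, hr, hdiag⟩ := exists_unboundedMod_hasDiagonalInter hκ₁ hcomp hncomp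
  have hrk {θ : Cardinal} (hθ : θ ≤ κ₁) (a : θ.ord.ToType) : {i | (a : Ordinal) < r i} ∈ D :=
    hr.lt_mem (isSuccLimit_ord hκ₁.le) ((ToType.toOrd a).2.trans_le (ord_le_ord.2 hθ))
  refine ⟨lt_of_not_ge fun hθ => hnofill ?_, lt_of_not_ge fun hθ => hnofill ?_⟩
  · exact hsat.exists_fill (by simp) (by simp) hdiag (toType_coe_injective _) (hrk hθ) hfg
  · obtain ⟨h, hgh, hhf⟩ := hsat.dual.exists_fill (f := fun b i => toDual (g b i))
      (g := fun a i => toDual (f a i)) (by simp) (by simp) hdiag (toType_coe_injective _)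
      (hrk hθ) fun b a => hfg a b
    exact ⟨fun i => ofDual (h i), hhf, hgh⟩

/-- Theorem 2.3: if `D` is a `κ₁`-complete, not `κ₁⁺`-complete nonprincipal
ultrafilter on a cardinal `κ₂` (here `#ι`), with `κ₁ > ℵ₀`, and `(θ₁, θ₂)` is the cofinality
of a cut of `J^{κ₂}/D` for a `(θ₁+θ₂)⁺`-saturated dense linear order `J` without endpoints,
then `θ₁, θ₂ > κ₁`. -/
theorem cut_cofinalities_above_completeness
    {ι : Type} (κ₁ : Cardinal) (hκ₁ : ℵ₀ < κ₁)
    (D : Ultrafilter ι) (hD : Nonprincipal D)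
    (hcomp : IsCompleteUF κ₁ D) (hncomp : ¬IsCompleteUF (Order.succ κ₁) D)
    (θ₁ θ₂ : Cardinal) (hθ₁ : θ₁.IsRegular) (hθ₂ : θ₂.IsRegular)
    (J : Type) [LinearOrder J] [DenselyOrdered J] [NoMinOrder J] [NoMaxOrder J] [Nonempty J]
    (hsat : SatPlus (θ₁ + θ₂) J)
    (f : θ₁.ord.ToType → ι → J) (g : θ₂.ord.ToType → ι → J)
    (hcut : RepCut D f g) :
    κ₁ < θ₁ ∧ κ₁ < θ₂ :=
  cut_cofinalities_above_completeness_general κ₁ hκ₁ D hcomp hncomp θ₁ θ₂ J hsat f g hcut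
end

section
/- Suppose D is a nonprincipal ultrafilter on an infinite cardinal κ, θ is a regular cardinal with 2^κ < θ, and θ satisfies the partition relation θ → (θ)²_{2^κ}: for every function d from the 2-element subsets of θ into a set of cardinality at most 2^κ, there exists X ⊆ θ with |X| = θ such that d is constant on the 2-element subsets of X. Then for every θ⁺-saturated dense linear order J without endpoints, no pair of sequences of functions from κ to J represents a (θ, θ)-cut of J^κ/D. (The paper states this for θ > κ weakly compact; the partition property is exactly what the proof uses.) -/
open Cardinal Set

/-! Colour a pair `α < β` of indices by the set of coordinates `i` at which the interval
`(f β i, g β i)` lies strictly inside `(f α i, g α i)`; there are `2^κ` colours. A homogeneous set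
`X` of size `θ` is cofinal in `θ`, and its colour `A` belongs to `D`, since every single colour
does. On a coordinate `i ∈ A` all the values `f α i` (`α ∈ X`) lie below all the values `g β i`,
so `θ⁺`-saturation of `J` puts a point `h i` between them; as `X` is cofinal, `h` fills the cut. -/

theorem ltD.trans {ι J : Type} [LinearOrder J] {D : Ultrafilter ι} {u v w : ι → J}
    (huv : ltD D u v) (hvw : ltD D v w) : ltD D u w :=
  Filter.mem_of_superset (Filter.inter_mem huv hvw) fun _ hi => hi.1.trans hi.2

theorem SatPlus.nonempty {τ : Cardinal} {J : Type} [LinearOrder J] (hsat : SatPlus τ J) :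
    Nonempty J :=
  let ⟨t, _⟩ := hsat ∅ ∅ (by simp) (by simp) (by simp)
  ⟨t⟩

theorem Cardinal.exists_mem_gt_of_mk_eq {θ : Cardinal} (hθ : ℵ₀ ≤ θ) {X : Set θ.ord.ToType}
    (hX : #X = θ) (a : θ.ord.ToType) : ∃ c ∈ X, a < c := by
  by_contra! h
  have hle : #X ≤ #(Iic a) := mk_le_mk_of_subset h
  exact (hle.trans_lt (mk_Iic_lt a (by simp) (by simpa))).ne (by simpa using hX)

section Nested

variable {ι J T : Type} [LinearOrder J]

def nestedCoords (f g : T → ι → J) (a b : T) : Set ι :=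
  {i | f a i < f b i ∧ f b i < g b i ∧ g b i < g a i}

theorem nestedCoords_mem {D : Ultrafilter ι} {f g : T → ι → J} {a b : T}
    (hf : ltD D (f a) (f b)) (hfg : ltD D (f b) (g b)) (hg : ltD D (g b) (g a)) :
    nestedCoords f g a b ∈ D :=
  Filter.inter_mem hf (Filter.inter_mem hfg hg)

theorem lt_of_forall_mem_nestedCoords [LinearOrder T] {f g : T → ι → J} {X : Set T}
    (hX : ∀ a ∈ X, ∃ c ∈ X, a < c) {i : ι}
    (hi : ∀ a ∈ X, ∀ b ∈ X, a < b → i ∈ nestedCoords f g a b) {a b : T} (ha : a ∈ X)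
    (hb : b ∈ X) : f a i < g b i := by
  rcases lt_trichotomy a b with hab | rfl | hab
  · have h := hi a ha b hb hab
    exact h.1.trans h.2.1
  · obtain ⟨c, hc, hac⟩ := hX a ha
    have h := hi a ha c hc hac
    exact h.1.trans (h.2.1.trans h.2.2)
  · have h := hi b hb a ha hab
    exact h.2.1.trans h.2.2

theorem exists_forall_between_of_subset_nestedCoords [LinearOrder T] {τ : Cardinal} (hsat : SatPlus τ J)
    {f g : T → ι → J} {X : Set T} (hXτ : #X ≤ τ) (hX : ∀ a ∈ X, ∃ c ∈ X, a < c) {A : Set ι}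
    (hA : ∀ a ∈ X, ∀ b ∈ X, a < b → A ⊆ nestedCoords f g a b) :
    ∃ h : ι → J, ∀ i ∈ A, ∀ a ∈ X, f a i < h i ∧ h i < g a i := by
  have hsep : ∀ i, ∃ t : J, i ∈ A → ∀ a ∈ X, f a i < t ∧ t < g a i := by
    intro i
    by_cases hi : i ∈ A
    · have hlt : ∀ x ∈ (f · i) '' X, ∀ y ∈ (g · i) '' X, x < y := by
        rintro _ ⟨a, ha, rfl⟩ _ ⟨b, hb, rfl⟩
        exact lt_of_forall_mem_nestedCoords hX (fun a ha b hb hab => hA a ha b hb hab hi) ha hb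
      obtain ⟨t, hft, htg⟩ := hsat _ _ (mk_image_le.trans hXτ) (mk_image_le.trans hXτ) hlt
      exact ⟨t, fun _ a ha => ⟨hft _ (mem_image_of_mem _ ha), htg _ (mem_image_of_mem _ ha)⟩⟩
    · obtain ⟨t⟩ := hsat.nonempty
      exact ⟨t, fun h => absurd h hi⟩
  choose h hh using hsep
  exact ⟨h, hh⟩

end Nested

theorem no_symmetric_cut_of_partition_general
    {ι : Type} (D : Ultrafilter ι)
    (θ : Cardinal) (hθ : θ.IsRegular)
    (hpart : ∀ (ρ : Type), #ρ ≤ 2 ^ #ι → ∀ d : θ.ord.ToType → θ.ord.ToType → ρ,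
      ∃ X : Set θ.ord.ToType, #X = θ ∧ ∃ r : ρ, ∀ a ∈ X, ∀ b ∈ X, a < b → d a b = r)
    (J : Type) [LinearOrder J]
    (hsat : SatPlus θ J) :
    ∀ f g : θ.ord.ToType → ι → J, ¬RepCut D f g := by
  rintro f g ⟨hf, hg, hfg, hfill⟩
  obtain ⟨X, hX, A, hA⟩ := hpart (Set ι) mk_set.le (nestedCoords f g)
  have hXcof := Cardinal.exists_mem_gt_of_mk_eq hθ.aleph0_le hX
  obtain ⟨⟨a₀, ha₀⟩⟩ : Nonempty X := mk_ne_zero_iff.1 (by rw [hX]; exact hθ.pos.ne')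
  have hAD : A ∈ D := by
    obtain ⟨c, hc, hac⟩ := hXcof a₀
    exact hA a₀ ha₀ c hc hac ▸ nestedCoords_mem (hf a₀ c hac) (hfg c c) (hg a₀ c hac)
  obtain ⟨h, hh⟩ := exists_forall_between_of_subset_nestedCoords hsat hX.le
    (fun a _ => hXcof a) fun a ha b hb hab => (hA a ha b hb hab).ge
  refine hfill ⟨h, fun a => ?_, fun b => ?_⟩
  · obtain ⟨c, hc, hac⟩ := hXcof a
    exact (hf a c hac).trans (Filter.mem_of_superset hAD fun i hi => (hh i hi c hc).1)
  · obtain ⟨c, hc, hbc⟩ := hXcof b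
    exact ltD.trans (Filter.mem_of_superset hAD fun i hi => (hh i hi c hc).2) (hg b c hbc)

/-- Theorem 2.8: if `θ` is regular, `2^κ < θ` and `θ → (θ)²_{2^κ}`, then for
every `θ⁺`-saturated dense linear order `J` without endpoints, no pair of sequences
represents a `(θ, θ)`-cut of `J^κ/D`. -/
theorem no_symmetric_cut_of_partition
    {ι : Type} [Infinite ι] (D : Ultrafilter ι) (hD : Nonprincipal D)
    (θ : Cardinal) (hθ : θ.IsRegular) (hbig : 2 ^ #ι < θ)
    (hpart : ∀ (ρ : Type), #ρ ≤ 2 ^ #ι → ∀ d : θ.ord.ToType → θ.ord.ToType → ρ,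
      ∃ X : Set θ.ord.ToType, #X = θ ∧ ∃ r : ρ, ∀ a ∈ X, ∀ b ∈ X, a < b → d a b = r)
    (J : Type) [LinearOrder J] [DenselyOrdered J] [NoMinOrder J] [NoMaxOrder J] [Nonempty J]
    (hsat : SatPlus θ J) :
    ∀ f g : θ.ord.ToType → ι → J, ¬RepCut D f g :=
  no_symmetric_cut_of_partition_general D θ hθ hpart J hsat
end

section
/- Suppose D is a nonprincipal ultrafilter on an infinite cardinal κ, λ and θ are regular cardinals, μ is a cardinal with 2^κ < μ ≤ λ, θ, and there exists a μ-complete ultrafilter E on λ × θ such that for every (α, γ) ∈ λ × θ the set {(ᾱ, γ̄) ∈ λ × θ : α < ᾱ and γ < γ̄} belongs to E. Then for every (λ+θ)⁺-saturated dense linear order J without endpoints, no pair of sequences of functions from κ to J represents a (λ, θ)-cut of J^κ/D. (The paper states this for μ strongly compact with κ < μ ≤ λ, θ; such an ultrafilter E exists in that case.) -/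
open Cardinal Set

/-!
A `μ`-complete ultrafilter `E` on `P` with `#ι < μ` makes every map `F : P → Set ι` equal
`E`-almost everywhere to its `E`-liminf. Apply this to the sets `{i | f α i < f ᾱ i}`,
`{i | g γ̄ i < g γ i}` and `{i | f ᾱ i < g γ̄ i}` for `(ᾱ, γ̄)` ranging along `E`: all the resulting
liminfs are in `D`, and the indices `α` (resp. `γ`) whose liminf is the `E`-typical one are cofinal.
On a `D`-large set of coordinates every `f α i` with `α` typical lies below every `g γ i` with `γ`
typical, since both are compared through a common `E`-generic pair `(ᾱ, γ̄)`. Saturation of `J`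
then fills the cut coordinatewise.
-/

namespace IsCompleteUF

variable {P ι : Type} {μ : Cardinal} {E : Ultrafilter P}

theorem iInter_mem_s3 (hE : IsCompleteUF μ E) (hι : #ι < μ) {A : ι → Set P} (hA : ∀ i, A i ∈ E) :
    ⋂ i, A i ∈ E := by
  rw [← sInter_range]
  exact hE _ (mk_range_le.trans_lt hι) (forall_mem_range.2 hA)

theorem eventually_all (hE : IsCompleteUF μ E) (hι : #ι < μ) {p : ι → P → Prop}
    (hp : ∀ i, ∀ᶠ x in (E : Filter P), p i x) : ∀ᶠ x in (E : Filter P), ∀ i, p i x :=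
  Filter.mem_of_superset (hE.iInter_mem_s3 hι hp) fun _ hx => mem_iInter.1 hx

theorem eventually_eq_liminf (hE : IsCompleteUF μ E) (hι : #ι < μ) (F : P → Set ι) :
    ∀ᶠ p in (E : Filter P), F p = Filter.liminf F E := by
  refine (hE.eventually_all hι fun i => ?_).mono fun p hp => ext hp
  by_cases hi : ∀ᶠ q in (E : Filter P), i ∈ F q
  · exact hi.mono fun q hq => iff_of_true hq (Filter.mem_liminf_iff_eventually_mem.2 hi)
  · exact (Ultrafilter.eventually_not.2 hi).mono fun q hq =>
      iff_of_false hq (mt Filter.mem_liminf_iff_eventually_mem.1 hi)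

theorem liminf_mem (hE : IsCompleteUF μ E) (hι : #ι < μ) {F : P → Set ι} {D : Filter ι}
    (hF : ∀ᶠ p in (E : Filter P), F p ∈ D) : Filter.liminf F E ∈ D := by
  obtain ⟨p, hpD, hp⟩ := (hF.and (hE.eventually_eq_liminf hι F)).exists
  exact hp ▸ hpD

end IsCompleteUF

theorem exists_between_of_cofinal {ι J Λ Θ : Type} [LinearOrder J] [Nonempty J]
    {D : Ultrafilter ι} {τ : Cardinal} (hsat : SatPlus τ J) {f : Λ → ι → J} {g : Θ → ι → J}
    {A : Set Λ} {B : Set Θ} (hA : #A ≤ τ) (hB : #B ≤ τ) {X : Set ι} (hX : X ∈ D)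
    (hsep : ∀ i ∈ X, ∀ α ∈ A, ∀ γ ∈ B, f α i < g γ i)
    (hfA : ∀ α, ∃ α' ∈ A, ltD D (f α) (f α')) (hgB : ∀ γ, ∃ γ' ∈ B, ltD D (g γ') (g γ)) :
    ∃ h : ι → J, (∀ α, ltD D (f α) h) ∧ ∀ γ, ltD D h (g γ) := by
  classical
  have hfill : ∀ i ∈ X, ∃ t, (∀ α ∈ A, f α i < t) ∧ ∀ γ ∈ B, t < g γ i := fun i hi => by
    obtain ⟨t, hft, htg⟩ := hsat ((f · i) '' A) ((g · i) '' B) (mk_image_le.trans hA)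
      (mk_image_le.trans hB) (by rintro _ ⟨α, hα, rfl⟩ _ ⟨γ, hγ, rfl⟩; exact hsep i hi α hα γ hγ)
    exact ⟨t, fun α hα => hft _ (mem_image_of_mem _ hα), fun γ hγ => htg _ (mem_image_of_mem _ hγ)⟩
  choose t hft htg using hfill
  refine ⟨fun i => if hi : i ∈ X then t i hi else Classical.arbitrary J, fun α => ?_, fun γ => ?_⟩
  · obtain ⟨α', hα', hlt⟩ := hfA α
    filter_upwards [hlt, hX] with i hi hiX
    simpa [hiX] using hi.trans (hft i hiX α' hα')
  · obtain ⟨γ', hγ', hlt⟩ := hgB γ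
    filter_upwards [hlt, hX] with i hi hiX
    simpa [hiX] using (htg i hiX γ' hγ').trans hi

theorem not_repCut_of_isCompleteUF {ι J Λ Θ : Type} [LinearOrder J] [Nonempty J]
    [LinearOrder Λ] [LinearOrder Θ] (D : Ultrafilter ι) {μ τ : Cardinal} (hι : #ι < μ)
    {E : Ultrafilter (Λ × Θ)} (hE : IsCompleteUF μ E)
    (hfst : ∀ α, ∀ᶠ p in (E : Filter (Λ × Θ)), α < p.1)
    (hsnd : ∀ γ, ∀ᶠ p in (E : Filter (Λ × Θ)), γ < p.2)
    (hΛ : #Λ ≤ τ) (hΘ : #Θ ≤ τ) (hsat : SatPlus τ J) (f : Λ → ι → J) (g : Θ → ι → J) :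
    ¬RepCut D f g := by
  rintro ⟨hf, hg, hfg, hno⟩
  set Φ : Λ → Set ι := fun α => Filter.liminf (fun p : Λ × Θ => {i | f α i < f p.1 i}) E
  set Ψ : Θ → Set ι := fun γ => Filter.liminf (fun p : Λ × Θ => {i | g p.2 i < g γ i}) E
  set L := Filter.liminf (fun p : Λ × Θ => {i | f p.1 i < g p.2 i}) E
  set F := Filter.liminf (fun p : Λ × Θ => Φ p.1) E
  set G := Filter.liminf (fun p : Λ × Θ => Ψ p.2) E
  have hΦ (α : Λ) : Φ α ∈ D := hE.liminf_mem hι ((hfst α).mono fun p => hf α p.1)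
  have hΨ (γ : Θ) : Ψ γ ∈ D := hE.liminf_mem hι ((hsnd γ).mono fun p => hg γ p.2)
  have hX : L ∩ F ∩ G ∈ D :=
    Filter.inter_mem (Filter.inter_mem (hE.liminf_mem hι (.of_forall fun p => hfg p.1 p.2))
      (hE.liminf_mem hι (.of_forall fun p => hΦ p.1)))
      (hE.liminf_mem hι (.of_forall fun p => hΨ p.2))
  refine hno (exists_between_of_cofinal hsat (A := {α | Φ α = F}) (B := {γ | Ψ γ = G})
    ((mk_set_le _).trans hΛ) ((mk_set_le _).trans hΘ) hX ?_ (fun α => ?_) (fun γ => ?_))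
  · rintro i ⟨⟨hiL, hiF⟩, hiG⟩ α (hα : Φ α = F) γ (hγ : Ψ γ = G)
    rw [← hα, Filter.mem_liminf_iff_eventually_mem] at hiF
    rw [← hγ, Filter.mem_liminf_iff_eventually_mem] at hiG
    rw [Filter.mem_liminf_iff_eventually_mem] at hiL
    obtain ⟨p, hαp, hpp, hpγ⟩ := (hiF.and (hiL.and hiG)).exists
    exact hαp.trans (hpp.trans hpγ)
  · obtain ⟨p, hp, hαp⟩ := ((hE.eventually_eq_liminf hι fun p => Φ p.1).and (hfst α)).exists
    exact ⟨p.1, hp, hf α p.1 hαp⟩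
  · obtain ⟨p, hp, hγp⟩ := ((hE.eventually_eq_liminf hι fun p => Ψ p.2).and (hsnd γ)).exists
    exact ⟨p.2, hp, hg γ p.2 hγp⟩

theorem no_cut_of_complete_fine_ultrafilter_general
    {ι : Type} (D : Ultrafilter ι)
    (lam θ μ : Cardinal)
    (hμ1 : 2 ^ #ι < μ)
    (E : Ultrafilter (lam.ord.ToType × θ.ord.ToType))
    (hEcomp : IsCompleteUF μ E)
    (hEfine : ∀ p : lam.ord.ToType × θ.ord.ToType,
      {q : lam.ord.ToType × θ.ord.ToType | p.1 < q.1 ∧ p.2 < q.2} ∈ E)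
    (J : Type) [LinearOrder J] [Nonempty J]
    (hsat : SatPlus (lam + θ) J) :
    ∀ (f : lam.ord.ToType → ι → J) (g : θ.ord.ToType → ι → J), ¬RepCut D f g := by
  obtain ⟨p₀, -⟩ := E.nonempty_of_mem Filter.univ_mem
  exact not_repCut_of_isCompleteUF D ((cantor _).trans hμ1) hEcomp
    (fun α => Filter.mem_of_superset (hEfine (α, p₀.2)) fun _ hq => hq.1)
    (fun γ => Filter.mem_of_superset (hEfine (p₀.1, γ)) fun _ hq => hq.2)
    ((mk_ord_toType lam).trans_le le_self_add) ((mk_ord_toType θ).trans_le le_add_self) hsat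

/-- Theorem 2.11: if `2^κ < μ ≤ λ, θ` with `λ, θ` regular, and there exists a
`μ`-complete ultrafilter `E` on `λ × θ` concentrating on upper-right quadrants, then for
every `(λ+θ)⁺`-saturated dense linear order `J` without endpoints, no pair of sequences
represents a `(λ, θ)`-cut of `J^κ/D`. -/
theorem no_cut_of_complete_fine_ultrafilter
    {ι : Type} [Infinite ι] (D : Ultrafilter ι) (hD : Nonprincipal D)
    (lam θ μ : Cardinal) (hlam : lam.IsRegular) (hθ : θ.IsRegular)
    (hμ1 : 2 ^ #ι < μ) (hμ2 : μ ≤ lam) (hμ3 : μ ≤ θ)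
    (E : Ultrafilter (lam.ord.ToType × θ.ord.ToType))
    (hEcomp : IsCompleteUF μ E)
    (hEfine : ∀ p : lam.ord.ToType × θ.ord.ToType,
      {q : lam.ord.ToType × θ.ord.ToType | p.1 < q.1 ∧ p.2 < q.2} ∈ E)
    (J : Type) [LinearOrder J] [DenselyOrdered J] [NoMinOrder J] [NoMaxOrder J] [Nonempty J]
    (hsat : SatPlus (lam + θ) J) :
    ∀ (f : lam.ord.ToType → ι → J) (g : θ.ord.ToType → ι → J), ¬RepCut D f g :=
  no_cut_of_complete_fine_ultrafilter_general D lam θ μ hμ1 E hEcomp hEfine J hsat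
end

section
/- Suppose D is a nonprincipal ultrafilter on an infinite cardinal κ, λ and θ are regular cardinals, and the polarized partition relation (λ θ) → (λ θ)^{1,1}_{2^κ} holds: for every function d from λ × θ into a set of cardinality at most 2^κ, there exist A ⊆ λ of order type λ and B ⊆ θ of order type θ such that d is constant on A × B. Then for every (λ+θ)⁺-saturated dense linear order J without endpoints, no pair of sequences of functions from κ to J represents a (λ, θ)-cut of J^κ/D. -/
open Cardinal Set

/-! Colour a pair `(a, b)` by the set of coordinates where `f a i < g b i`; this is a subset of
`ι`, so there are at most `2 ^ κ` colours. A homogeneous `A × B` of full sizes gives a single set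
`X ∈ D` on which every `f a` lies below every `g b` pointwise, and saturation fills each of these
pointwise cuts. The resulting function fills the cut in the ultrapower, because `A` and `B` are
cofinal in `λ` and `θ`. -/

theorem isCofinal_of_mk_eq {c : Cardinal} {s : Set c.ord.ToType} (hs : #s = c) : IsCofinal s := by
  by_contra hcof
  obtain ⟨x, hx⟩ := not_isCofinal_iff.1 hcof
  have hlt : #(Iio x) < c := by simpa using mk_Iio_lt x (by simp)
  exact ((mk_le_mk_of_subset hx).trans_lt hlt).ne hs

theorem ltD_trans {ι J : Type} [LinearOrder J] {D : Ultrafilter ι} {f g h : ι → J}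
    (hfg : ltD D f g) (hgh : ltD D g h) : ltD D f h :=
  Filter.mem_of_superset (Filter.inter_mem hfg hgh) fun _ hi => hi.1.trans hi.2

instance {ι J : Type} [LinearOrder J] (D : Ultrafilter ι) : IsTrans (ι → J) (ltD D) :=
  ⟨fun _ _ _ => ltD_trans⟩

theorem forall_rel_of_isCofinal {T α : Type} [PartialOrder T] {r : α → α → Prop} [IsTrans α r]
    {F : T → α} (hF : ∀ a b, a < b → r (F a) (F b)) {s : Set T} (hs : IsCofinal s) {x : α}
    (hx : ∀ a ∈ s, r (F a) x) (a : T) : r (F a) x := by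
  obtain ⟨b, hb, hab⟩ := hs a
  rcases hab.eq_or_lt with rfl | hab
  · exact hx a hb
  · exact _root_.trans (hF a b hab) (hx b hb)

theorem SatPlus.exists_ltD_of_separated {τ : Cardinal} {ι J T₁ T₂ : Type} [LinearOrder J]
    (hsat : SatPlus τ J) {D : Ultrafilter ι} {f : T₁ → ι → J} {g : T₂ → ι → J}
    {A : Set T₁} {B : Set T₂} (hA : #A ≤ τ) (hB : #B ≤ τ) {X : Set ι} (hXD : X ∈ D)
    (hX : ∀ i ∈ X, ∀ a ∈ A, ∀ b ∈ B, f a i < g b i) :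
    ∃ h : ι → J, (∀ a ∈ A, ltD D (f a) h) ∧ ∀ b ∈ B, ltD D h (g b) := by
  have := hsat.nonempty
  have hfill : ∀ i, ∃ t : J, i ∈ X → (∀ a ∈ A, f a i < t) ∧ ∀ b ∈ B, t < g b i := by
    intro i
    by_cases hi : i ∈ X
    · obtain ⟨t, hft, htg⟩ := hsat ((f · i) '' A) ((g · i) '' B) (mk_image_le.trans hA)
        (mk_image_le.trans hB) (by rintro _ ⟨a, ha, rfl⟩ _ ⟨b, hb, rfl⟩; exact hX i hi a ha b hb)
      exact ⟨t, fun _ => ⟨fun a ha => hft _ ⟨a, ha, rfl⟩, fun b hb => htg _ ⟨b, hb, rfl⟩⟩⟩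
    · exact ⟨Classical.arbitrary J, fun h => absurd h hi⟩
  choose h hh using hfill
  refine ⟨h, fun a ha => ?_, fun b hb => ?_⟩
  · exact Filter.mem_of_superset hXD fun i hi => (hh i hi).1 a ha
  · exact Filter.mem_of_superset hXD fun i hi => (hh i hi).2 b hb

theorem no_cut_of_polarized_partition_general
    {ι : Type} (D : Ultrafilter ι)
    (lam θ : Cardinal) (hlam : lam.IsRegular) (hθ : θ.IsRegular)
    (hpart : ∀ (ρ : Type), #ρ ≤ 2 ^ #ι →
      ∀ d : lam.ord.ToType → θ.ord.ToType → ρ,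
        ∃ (A : Set lam.ord.ToType) (B : Set θ.ord.ToType),
          #A = lam ∧ #B = θ ∧ ∃ r : ρ, ∀ a ∈ A, ∀ b ∈ B, d a b = r)
    (J : Type) [LinearOrder J]
    (hsat : SatPlus (lam + θ) J) :
    ∀ (f : lam.ord.ToType → ι → J) (g : θ.ord.ToType → ι → J), ¬RepCut D f g := by
  rintro f g ⟨hf, hg, hfg, hne⟩
  obtain ⟨A, B, hA, hB, X, hX⟩ :=
    hpart (Set ι) mk_set.le fun a b => {i | f a i < g b i}
  obtain ⟨a₀, ha₀⟩ : A.Nonempty := by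
    rw [← nonempty_coe_sort, ← mk_ne_zero_iff, hA]; exact hlam.pos.ne'
  obtain ⟨b₀, hb₀⟩ : B.Nonempty := by
    rw [← nonempty_coe_sort, ← mk_ne_zero_iff, hB]; exact hθ.pos.ne'
  have hXD : X ∈ D := hX a₀ ha₀ b₀ hb₀ ▸ hfg a₀ b₀
  have hsep : ∀ i ∈ X, ∀ a ∈ A, ∀ b ∈ B, f a i < g b i := fun i hi a ha b hb =>
    show i ∈ {i | f a i < g b i} from hX a ha b hb ▸ hi
  obtain ⟨h, hfh, hhg⟩ := hsat.exists_ltD_of_separated (hA.trans_le le_self_add)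
    (hB.trans_le le_add_self) hXD hsep
  exact hne ⟨h, forall_rel_of_isCofinal hf (isCofinal_of_mk_eq hA) hfh,
    forall_rel_of_isCofinal (r := Function.swap (ltD D)) hg (isCofinal_of_mk_eq hB) hhg⟩

/-- Theorem 2.14: if the polarized partition relation
`(λ θ) → (λ θ)^{1,1}_{2^κ}` holds, then for every `(λ+θ)⁺`-saturated dense linear order `J`
without endpoints, no pair of sequences represents a `(λ, θ)`-cut of `J^κ/D`. -/
theorem no_cut_of_polarized_partition
    {ι : Type} [Infinite ι] (D : Ultrafilter ι) (hD : Nonprincipal D)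
    (lam θ : Cardinal) (hlam : lam.IsRegular) (hθ : θ.IsRegular)
    (hpart : ∀ (ρ : Type), #ρ ≤ 2 ^ #ι →
      ∀ d : lam.ord.ToType → θ.ord.ToType → ρ,
        ∃ (A : Set lam.ord.ToType) (B : Set θ.ord.ToType),
          #A = lam ∧ #B = θ ∧ ∃ r : ρ, ∀ a ∈ A, ∀ b ∈ B, d a b = r)
    (J : Type) [LinearOrder J] [DenselyOrdered J] [NoMinOrder J] [NoMaxOrder J] [Nonempty J]
    (hsat : SatPlus (lam + θ) J) :
    ∀ (f : lam.ord.ToType → ι → J) (g : θ.ord.ToType → ι → J), ¬RepCut D f g :=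
  no_cut_of_polarized_partition_general D lam θ hlam hθ hpart J hsat
end

section
/- Suppose D is a nonprincipal ultrafilter on an infinite cardinal κ, and θ, λ are regular cardinals such that θ^κ < λ. Then for every (λ+θ)⁺-saturated dense linear order J without endpoints, no pair of sequences of functions from κ to J represents a (λ, θ)-cut of J^κ/D. -/
open Cardinal Set

/-!
Only `θ^κ < λ = cf λ` functions `e : κ → θ` exist, so the mixes `i ↦ g (e i) i` that do not lie
above the whole sequence `f` all lie below a single `f c`. Coordinatewise, saturation gives `h i`
below every `g b i` exceeding `f c i` and above every `f a i` that is below all of these. Then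
`h <_D g b` holds wherever `f c < g b`. If instead `h ≤ f a` on a set in `D`, choosing there some
`b` with `f c i < g b i ≤ f a i` produces a mix that is below `f a` yet above `f c`.
-/

universe u

theorem exists_forall_lt_of_mk_lt_cof {α T : Type u} [LinearOrder T] (w : α → T)
    (hw : #α < Order.cof T) : ∃ b, ∀ a, w a < b := by
  have : ¬IsCofinal (range w) := fun hc =>
    ((Order.cof_le hc).trans mk_range_le).not_gt hw
  obtain ⟨b, hb⟩ := not_isCofinal_iff.1 this
  exact ⟨b, fun a => hb _ (mem_range_self a)⟩

section UltrapowerOrder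

variable {ι J : Type} [LinearOrder J] {D : Ultrafilter ι}

theorem not_ltD_iff {f g : ι → J} : ¬ltD D f g ↔ {i | g i ≤ f i} ∈ D := by
  simp only [ltD, ← Ultrafilter.compl_mem_iff_notMem, compl_ofPred, not_lt]

theorem ltD_of_not_ltD_of_ltD {f g h : ι → J} (hfg : ¬ltD D f g) (hfh : ltD D f h) :
    ltD D g h := by
  filter_upwards [not_ltD_iff.1 hfg, hfh] with i hgf hfh using hgf.trans_lt hfh

theorem exists_ltD_of_not_forall_ltD {M T : Type} [LinearOrder T] {f : T → ι → J}
    (hf : ∀ a b, a < b → ltD D (f a) (f b)) (m : M → ι → J) (hM : #M < Order.cof T) :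
    ∃ c, ∀ x, (∃ a, ¬ltD D (f a) (m x)) → ltD D (m x) (f c) := by
  choose w hw using fun x : {x // ∃ a, ¬ltD D (f a) (m x)} => x.2
  obtain ⟨c, hc⟩ := exists_forall_lt_of_mk_lt_cof w ((mk_subtype_le _).trans_lt hM)
  exact ⟨c, fun x hx => ltD_of_not_ltD_of_ltD (hw ⟨x, hx⟩) (hf _ _ (hc ⟨x, hx⟩))⟩

end UltrapowerOrder

theorem SatPlus.exists_separating {τ : Cardinal} {J : Type} [LinearOrder J]
    (hsat : SatPlus τ J) {A B : Type} (a : A → J) (b : B → J) (hA : #A ≤ τ) (hB : #B ≤ τ) :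
    ∃ t, (∀ x, (∀ y, a x < b y) → a x < t) ∧ ∀ y, t < b y := by
  have hlow : #{z | z ∈ range a ∧ ∀ y, z < b y} ≤ τ :=
    (mk_le_mk_of_subset fun _ hz => hz.1).trans (mk_range_le.trans hA)
  obtain ⟨t, hlt, hgt⟩ := hsat _ (range b) hlow (mk_range_le.trans hB)
    (by rintro _ ⟨-, hz⟩ _ ⟨y, rfl⟩; exact hz y)
  exact ⟨t, fun x hx => hlt _ ⟨mem_range_self x, hx⟩, fun y => hgt _ (mem_range_self y)⟩

theorem exists_between_of_mk_lt_cof {ι J T₁ T₂ : Type} [LinearOrder J] [LinearOrder T₁]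
    {D : Ultrafilter ι} {f : T₁ → ι → J} {g : T₂ → ι → J} {τ : Cardinal} (hsat : SatPlus τ J)
    (h₁ : #T₁ ≤ τ) (h₂ : #T₂ ≤ τ) (hcof : #(ι → T₂) < Order.cof T₁)
    (hf : ∀ a b, a < b → ltD D (f a) (f b)) (hfg : ∀ a b, ltD D (f a) (g b)) :
    ∃ h : ι → J, (∀ a, ltD D (f a) h) ∧ ∀ b, ltD D h (g b) := by
  obtain ⟨c, hc⟩ := exists_ltD_of_not_forall_ltD hf (fun e i => g (e i) i) hcof
  choose h hfh hhg using fun i => hsat.exists_separating (fun a => f a i)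
    (fun b : {b // f c i < g b i} => g b i) h₁ ((mk_subtype_le _).trans h₂)
  refine ⟨h, fun a => ?_, fun b => ?_⟩
  · by_contra hah
    have hle := not_ltD_iff.1 hah
    have hdrop : ∀ i ∈ {i | h i ≤ f a i}, ∃ b, f c i < g b i ∧ g b i ≤ f a i := by
      intro i hi
      by_contra! hno
      exact (hfh i a fun b => hno b b.2).not_ge hi
    obtain ⟨b₀, -⟩ := hdrop _ (D.nonempty_of_mem hle).some_mem
    have : Nonempty T₂ := ⟨b₀⟩
    choose! e he using hdrop
    have hea : ¬ltD D (f a) fun i => g (e i) i :=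
      not_ltD_iff.2 (by filter_upwards [hle] with i hi using (he i hi).2)
    exact not_ltD_iff.2 (by filter_upwards [hle] with i hi using (he i hi).1.le) (hc e ⟨a, hea⟩)
  · filter_upwards [hfg c b] with i hi using hhg i ⟨b, hi⟩

theorem no_cut_of_small_power_general
    {ι : Type} (D : Ultrafilter ι)
    (lam θ : Cardinal) (hlam : lam.IsRegular)
    (hpow : θ ^ #ι < lam)
    (J : Type) [LinearOrder J]
    (hsat : SatPlus (lam + θ) J) :
    ∀ (f : lam.ord.ToType → ι → J) (g : θ.ord.ToType → ι → J), ¬RepCut D f g := by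
  rintro f g ⟨hf, -, hfg, hfill⟩
  refine hfill (exists_between_of_mk_lt_cof hsat ?_ ?_ ?_ hf hfg)
  · rw [mk_ord_toType]
    exact le_self_add
  · rw [mk_ord_toType]
    exact le_add_self
  · rwa [← power_def, mk_ord_toType, Ordinal.cof_toType, hlam.cof_ord]

/-- Theorem 2.16: if `θ, λ` are regular and `θ^κ < λ`, then for every
`(λ+θ)⁺`-saturated dense linear order `J` without endpoints, no pair of sequences
represents a `(λ, θ)`-cut of `J^κ/D`. -/
theorem no_cut_of_small_power
    {ι : Type} [Infinite ι] (D : Ultrafilter ι) (hD : Nonprincipal D)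
    (lam θ : Cardinal) (hlam : lam.IsRegular) (hθ : θ.IsRegular)
    (hpow : θ ^ #ι < lam)
    (J : Type) [LinearOrder J] [DenselyOrdered J] [NoMinOrder J] [NoMaxOrder J] [Nonempty J]
    (hsat : SatPlus (lam + θ) J) :
    ∀ (f : lam.ord.ToType → ι → J) (g : θ.ord.ToType → ι → J), ¬RepCut D f g :=
  no_cut_of_small_power_general D lam θ hlam hpow J hsat
end

section
/- Suppose σ < κ ≤ μ < λ are infinite cardinals with κ and λ regular, |α|^{<κ} < λ for every α < λ, τ : λ × λ → σ is a function, U is a stationary subset of λ with U ⊆ {α < λ : cf(α) ≥ κ}, τ₁ : U → σ is a function, and ⟨β_{v,ξ} : v ∈ [U]^{<κ}, ξ < μ⟩ is a family of ordinals less than λ such that sup(v) < β_{v,ξ} for all v and ξ, and for every v ∈ [U]^{<κ} there is some ξ < μ such that τ(α, β_{v,ξ}) = τ₁(α) for every α ∈ v. Then there are a club E of λ and a function τ₂ : U ∩ E → σ such that: for every v ∈ [U]^{<κ} and every δ ∈ U ∩ E with sup(v) < δ, there is an ordinal β with sup(v) < β < δ such that τ(α, β) = τ₁(α) for every α ∈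 v and τ(β, δ) = τ₂(δ). -/
open Cardinal Set

/-- The order type of a set of ordinals. -/
noncomputable def setOtp (C : Set Ordinal.{0}) : Ordinal.{1} :=
  Ordinal.type (Subrel ((· < ·) : Ordinal.{0} → Ordinal.{0} → Prop) (· ∈ C))

/-- `C` is a club (closed unbounded) subset of `l`. -/
def IsClubIn (l : Ordinal) (C : Set Ordinal) : Prop :=
  C ⊆ Set.Iio l ∧
  (∀ s : Set Ordinal, s ⊆ C → s.Nonempty → sSup s < l → sSup s ∈ C) ∧
  ∀ a < l, ∃ b ∈ C, a < b

/-- `S` is stationary in `l`: it meets every club of `l`. -/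
def IsStationaryIn (l : Ordinal) (S : Set Ordinal) : Prop :=
  ∀ C : Set Ordinal, IsClubIn l C → (S ∩ C).Nonempty

/-- The non-accumulation points of a set of ordinals. -/
noncomputable def nacc (C : Set Ordinal) : Set Ordinal :=
  {β ∈ C | sSup (C ∩ Set.Iio β) < β}

/-! Let `F γ` be the supremum of the witnesses `β_{v,ξ}` with `v ⊆ U ∩ γ`. There are at most
`κ · |γ|^{<κ} · μ < λ` of them, so the closure points of `F` form a club `E`, and for `δ ∈ U ∩ E`
every `v` bounded below `δ` has all its witnesses below `δ`. If no colour `c < σ` served every such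
`v` at `δ`, pick one failing `v_c` per colour: their union still has size `< κ ≤ cf δ`, so it is
bounded below `δ`, and its witness `β < δ` fails for `v_c` with `c = τ(β, δ)`. -/

open Ordinal Order

universe u v

theorem mk_subset_mk_lt_le {α : Type u} (s : Set α) (κ : Cardinal.{u}) :
    #{t : Set α // t ⊆ s ∧ #t < κ} ≤ κ * max #s ℵ₀ ^< κ := by
  -- the cardinals below `κ` are the cardinalities of the initial segments of `κ.ord.ToType`
  let size : κ.ord.ToType → Cardinal.{u} := fun i => (typein (α := κ.ord.ToType) (· < ·) i).card
  have hsize : ∀ i, size i < κ := fun i =>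
    (card_typein_lt (α := κ.ord.ToType) (r := (· < ·)) i (by simp)).trans_eq (mk_ord_toType κ)
  let f : (Σ i, {t : Set α // t ⊆ s ∧ #t ≤ size i}) → {t : Set α // t ⊆ s ∧ #t < κ} :=
    fun p => ⟨p.2.1, p.2.2.1, p.2.2.2.trans_lt (hsize p.1)⟩
  have hf : Function.Surjective f := by
    rintro ⟨t, hts, htκ⟩
    have ht : (#t).ord < typeLT κ.ord.ToType := by rwa [type_toType, ord_lt_ord]
    exact ⟨⟨enum (α := κ.ord.ToType) (· < ·) ⟨_, ht⟩, t, hts,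
      by simp only [size, typein_enum, card_ord, le_rfl]⟩, rfl⟩
  calc #{t : Set α // t ⊆ s ∧ #t < κ}
      ≤ #(Σ i, {t : Set α // t ⊆ s ∧ #t ≤ size i}) := mk_le_of_surjective hf
    _ = sum fun i => #{t : Set α // t ⊆ s ∧ #t ≤ size i} := mk_sigma _
    _ ≤ sum fun _ : κ.ord.ToType => max #s ℵ₀ ^< κ :=
      sum_le_sum _ _ fun i => (mk_bounded_subset_le s _).trans (le_powerlt _ (hsize i))
    _ = κ * max #s ℵ₀ ^< κ := by rw [sum_const', mk_ord_toType]

theorem lift_powerlt_le (a b : Cardinal.{u}) :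
    lift.{v} a ^< lift.{v} b ≤ lift.{v} (a ^< b) :=
  powerlt_le.2 fun x hx => by
    obtain ⟨y, hy, rfl⟩ := lt_lift_iff.1 hx
    rw [← lift_power]
    exact lift_le.2 (le_powerlt a hy)

theorem exists_mem_forall_exists_apply_eq_of_iUnion_mem {α β γ : Type*} {𝒱 : Set (Set α)}
    {G : Set α → Set β} {f : β → γ} {C : Set γ}
    (hunion : ∀ v : C → Set α, (∀ c, v c ∈ 𝒱) → ⋃ c, v c ∈ 𝒱)
    (hanti : ∀ v w, v ⊆ w → w ∈ 𝒱 → G w ⊆ G v)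
    (hex : ∀ v ∈ 𝒱, ∃ b ∈ G v, f b ∈ C) :
    ∃ c ∈ C, ∀ v ∈ 𝒱, ∃ b ∈ G v, f b = c := by
  by_contra! hbad
  choose v hv𝒱 hvG using hbad
  have hw := hunion (fun c => v c c.2) fun c => hv𝒱 c c.2
  obtain ⟨b, hb, hbC⟩ := hex _ hw
  exact hvG _ hbC b (hanti _ _ (subset_iUnion (fun c : C => v c c.2) ⟨_, hbC⟩) hw hb) rfl

theorem isClubIn_setOf_forall_lt {l : Ordinal} (hl : ℵ₀ < l.cof) {F : Ordinal → Ordinal}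
    (hF : Monotone F) (hFl : ∀ γ < l, F γ < l) :
    IsClubIn l {β | β < l ∧ ∀ γ < β, F γ < β} := by
  refine ⟨fun β hβ => hβ.1, fun s hs hne hsl => ⟨hsl, fun γ hγ => ?_⟩, fun a ha => ?_⟩
  · have hbdd : BddAbove s := bddAbove_Iio.mono fun β hβ => (hs hβ).1
    obtain ⟨β, hβs, hγβ⟩ := (lt_csSup_iff hbdd hne).1 hγ
    exact ((hs hβs).2 γ hγβ).trans_le (le_csSup hbdd hβs)
  · have hlim : IsSuccLimit l := one_lt_cof_iff.1 (one_lt_aleph0.trans hl)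
    refine ⟨nfp (succ ∘ F) (succ a), ⟨nfp_lt_ord hl (fun γ hγ => hlim.succ_lt (hFl γ hγ))
      (hlim.succ_lt ha), fun γ hγ => ?_⟩, (lt_succ a).trans_le (le_nfp _ _)⟩
    obtain ⟨n, hn⟩ := lt_nfp_iff.1 hγ
    calc F γ ≤ F ((succ ∘ F)^[n] (succ a)) := hF hn.le
      _ < (succ ∘ F)^[n + 1] (succ a) := by
        rw [Function.iterate_succ_apply']; exact lt_succ _
      _ ≤ _ := iterate_le_nfp _ _ _

noncomputable def witnessSup (U : Set Ordinal.{0}) (κ μ : Cardinal.{0})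
    (B : Set Ordinal → Ordinal → Ordinal) (γ : Ordinal.{0}) : Ordinal.{0} :=
  ⨆ p : {v : Set Ordinal // v ⊆ U ∩ Iio γ ∧ #v < lift.{1} κ} × Iio μ.ord, B p.1 p.2

section witnessSup

variable {U : Set Ordinal.{0}} {κ μ : Cardinal.{0}} {B : Set Ordinal → Ordinal → Ordinal}

theorem le_witnessSup {l : Ordinal} (hB : ∀ v ⊆ U, #v < lift.{1} κ → ∀ ξ < μ.ord, B v ξ < l)
    {γ : Ordinal} {v : Set Ordinal} (hvγ : v ⊆ U ∩ Iio γ) (hvκ : #v < lift.{1} κ)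
    {ξ : Ordinal} (hξ : ξ < μ.ord) : B v ξ ≤ witnessSup U κ μ B γ := by
  refine le_ciSup (f := fun p : {v : Set Ordinal // v ⊆ U ∩ Iio γ ∧ #v < lift.{1} κ} ×
    Iio μ.ord => B p.1 p.2) ⟨l, ?_⟩ ⟨⟨v, hvγ, hvκ⟩, ξ, hξ⟩
  rintro _ ⟨⟨⟨w, hwγ, hwκ⟩, ζ, hζ⟩, rfl⟩
  exact (hB w (fun _ h => (hwγ h).1) hwκ ζ hζ).le

theorem monotone_witnessSup {l : Ordinal}
    (hB : ∀ v ⊆ U, #v < lift.{1} κ → ∀ ξ < μ.ord, B v ξ < l) :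
    Monotone (witnessSup U κ μ B) := fun _ _ h =>
  ciSup_le' fun ⟨⟨_, hvγ, hvκ⟩, _, hξ⟩ =>
    le_witnessSup hB (hvγ.trans (inter_subset_inter_right _ (Iio_subset_Iio h))) hvκ hξ

theorem witness_lt_of_forall_witnessSup_lt {l : Ordinal}
    (hB : ∀ v ⊆ U, #v < lift.{1} κ → ∀ ξ < μ.ord, B v ξ < l) (hU : BddAbove U) {δ : Ordinal}
    (hδ : IsSuccLimit δ) (hδF : ∀ γ < δ, witnessSup U κ μ B γ < δ) {v : Set Ordinal}
    (hvU : v ⊆ U) (hvκ : #v < lift.{1} κ) (hv : sSup v < δ) {ξ : Ordinal} (hξ : ξ < μ.ord) :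
    B v ξ < δ := by
  have hvγ : v ⊆ U ∩ Iio (succ (sSup v)) := fun α hα =>
    ⟨hvU hα, lt_succ_of_le (le_csSup (hU.mono hvU) hα)⟩
  exact (le_witnessSup hB hvγ hvκ hξ).trans_lt (hδF _ (hδ.succ_lt hv))

theorem witnessSup_lt {lam : Cardinal.{0}} (hlam : lam.IsRegular) (hκ₀ : ℵ₀ ≤ κ) (hκ : κ < lam)
    (hμ : μ < lam) (hsmall : ∀ α < lam.ord, α.card ^< κ < lam)
    (hB : ∀ v ⊆ U, #v < lift.{1} κ → ∀ ξ < μ.ord, B v ξ < lam.ord) {γ : Ordinal}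
    (hγ : γ < lam.ord) : witnessSup U κ μ B γ < lam.ord := by
  have hω : ω < lam.ord := by rw [lt_ord, card_omega0]; exact hκ₀.trans_lt hκ
  have hsubsets : #{v : Set Ordinal // v ⊆ U ∩ Iio γ ∧ #v < lift.{1} κ} ≤
      lift.{1} (κ * (max γ ω).card ^< κ) := calc
    _ ≤ #{v : Set Ordinal // v ⊆ Iio γ ∧ #v < lift.{1} κ} :=
      mk_subtype_mono fun v hv => ⟨hv.1.trans inter_subset_right, hv.2⟩
    _ ≤ lift.{1} κ * max #(Iio γ) ℵ₀ ^< lift.{1} κ := mk_subset_mk_lt_le _ _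
    _ ≤ lift.{1} (κ * (max γ ω).card ^< κ) := by
      rw [Cardinal.mk_Iio_ordinal, (Monotone.map_max fun _ _ => card_le_card), card_omega0,
        ← lift_aleph0.{1, 0}, ← lift_max, Cardinal.lift_mul]
      gcongr
      exact lift_powerlt_le _ _
  refine lift_iSup_lt_of_lt_cof ?_ fun p => hB _ (fun _ h => (p.1.2.1 h).1) p.1.2.2 _ p.2.2
  rw [Cardinal.lift_uzero, ← Ordinal.lift_cof, hlam.cof_ord, mk_prod, Cardinal.lift_id,
    Cardinal.lift_id, Cardinal.mk_Iio_ordinal, card_ord]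
  calc _ ≤ lift.{1} (κ * (max γ ω).card ^< κ) * lift.{1} μ := mul_le_mul_left hsubsets _
    _ < lift.{1} lam := by
      rw [← Cardinal.lift_mul, Cardinal.lift_lt]
      exact mul_lt_of_lt hlam.aleph0_le
        (mul_lt_of_lt hlam.aleph0_le hκ (hsmall _ (max_lt hγ hω))) hμ

end witnessSup

theorem exists_uniform_colour_of_le_cof {σ κ : Cardinal.{0}} (hκ : κ.IsRegular)
    (hσκ : σ < κ) {U : Set Ordinal} (hU : BddAbove U) {δ : Ordinal} (hδ : κ ≤ δ.cof)
    {tau : Ordinal → Ordinal → Ordinal} {tau1 : Ordinal → Ordinal}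
    (hcol : ∀ β < δ, tau β δ < σ.ord)
    (hex : ∀ v ⊆ U, #v < lift.{1} κ → sSup v < δ →
      ∃ β, sSup v < β ∧ β < δ ∧ ∀ α ∈ v, tau α β = tau1 α) :
    ∃ c < σ.ord, ∀ v ⊆ U, #v < lift.{1} κ → sSup v < δ →
      ∃ β, sSup v < β ∧ β < δ ∧ (∀ α ∈ v, tau α β = tau1 α) ∧ tau β δ = c := by
  have hunion : ∀ v : Iio σ.ord → Set Ordinal,
      (∀ c, v c ⊆ U ∧ #(v c) < lift.{1} κ ∧ sSup (v c) < δ) →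
      (⋃ c, v c) ⊆ U ∧ #(⋃ c, v c) < lift.{1} κ ∧ sSup (⋃ c, v c) < δ := by
    intro v hv
    have hκ' : #(⋃ c, v c) < lift.{1} κ := by
      refine (card_iUnion_lt_iff_forall_of_isRegular hκ.lift ?_).2 fun c => (hv c).2.1
      rwa [Cardinal.mk_Iio_ordinal, card_ord, Cardinal.lift_lt]
    refine ⟨iUnion_subset fun c => (hv c).1, hκ', sSup_lt_of_lt_cof ?_ fun α hα => ?_⟩
    · exact hκ'.trans_le (by rw [← Ordinal.lift_cof]; exact Cardinal.lift_le.2 hδ)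
    · obtain ⟨c, hαc⟩ := mem_iUnion.1 hα
      exact (le_csSup (hU.mono (hv c).1) hαc).trans_lt (hv c).2.2
  obtain ⟨c, hc, hcv⟩ := exists_mem_forall_exists_apply_eq_of_iUnion_mem
    (𝒱 := {v | v ⊆ U ∧ #v < lift.{1} κ ∧ sSup v < δ})
    (G := fun v => {β | sSup v < β ∧ β < δ ∧ ∀ α ∈ v, tau α β = tau1 α})
    (f := fun β => tau β δ) (C := Iio σ.ord) hunion
    (fun v w hvw ⟨hwU, _, _⟩ β ⟨hwβ, hβδ, hβ⟩ =>
      ⟨(csSup_le_csSup' (hU.mono hwU) hvw).trans_lt hwβ, hβδ, fun α hα => hβ α (hvw hα)⟩)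
    (fun v ⟨hvU, hvκ, hv⟩ =>
      let ⟨β, hvβ, hβδ, hβ⟩ := hex v hvU hvκ hv
      ⟨β, ⟨hvβ, hβδ, hβ⟩, hcol β hβδ⟩)
  refine ⟨c, hc, fun v hvU hvκ hv => ?_⟩
  obtain ⟨β, ⟨hvβ, hβδ, hβ⟩, rfl⟩ := hcv v ⟨hvU, hvκ, hv⟩
  exact ⟨β, hvβ, hβδ, hβ, rfl⟩

theorem club_guessing_colour_general
    (σ κ μ lam : Cardinal.{0})
    (hσκ : σ < κ) (hκμ : κ ≤ μ) (hμlam : μ < lam)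
    (hκreg : κ.IsRegular) (hlamreg : lam.IsRegular)
    (hsmall : ∀ α < lam.ord, α.card ^< κ < lam)
    (tau : Ordinal → Ordinal → Ordinal)
    (htau : ∀ α < lam.ord, ∀ β < lam.ord, tau α β < σ.ord)
    (U : Set Ordinal) (hU1 : U ⊆ {α | α < lam.ord ∧ κ ≤ α.cof})
    (tau1 : Ordinal → Ordinal)
    (B : Set Ordinal → Ordinal → Ordinal)
    (hB1 : ∀ v : Set Ordinal, v ⊆ U → #v < Cardinal.lift.{1} κ → ∀ ξ < μ.ord,
      sSup v < B v ξ ∧ B v ξ < lam.ord)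
    (hB2 : ∀ v : Set Ordinal, v ⊆ U → #v < Cardinal.lift.{1} κ →
      ∃ ξ < μ.ord, ∀ α ∈ v, tau α (B v ξ) = tau1 α) :
    ∃ E : Set Ordinal, IsClubIn lam.ord E ∧
      ∃ tau2 : Ordinal → Ordinal, (∀ δ ∈ U ∩ E, tau2 δ < σ.ord) ∧
        ∀ v : Set Ordinal, v ⊆ U → #v < Cardinal.lift.{1} κ →
          ∀ δ ∈ U ∩ E, sSup v < δ →
            ∃ β, sSup v < β ∧ β < δ ∧ (∀ α ∈ v, tau α β = tau1 α) ∧ tau β δ = tau2 δ := by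
  have hκlam : κ < lam := hκμ.trans_lt hμlam
  have hUbdd : BddAbove U := bddAbove_Iio.mono fun α hα => (hU1 hα).1
  have hBlam : ∀ v ⊆ U, #v < lift.{1} κ → ∀ ξ < μ.ord, B v ξ < lam.ord :=
    fun v hvU hvκ ξ hξ => (hB1 v hvU hvκ ξ hξ).2
  set E : Set Ordinal := {β | β < lam.ord ∧ ∀ γ < β, witnessSup U κ μ B γ < β}
  have hE : IsClubIn lam.ord E :=
    isClubIn_setOf_forall_lt (by rw [hlamreg.cof_ord]; exact hκreg.aleph0_le.trans_lt hκlam)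
      (monotone_witnessSup hBlam)
      (fun γ => witnessSup_lt hlamreg hκreg.aleph0_le hκlam hμlam hsmall hBlam)
  have hcolour : ∀ δ ∈ U ∩ E, ∃ c < σ.ord, ∀ v ⊆ U, #v < lift.{1} κ → sSup v < δ →
      ∃ β, sSup v < β ∧ β < δ ∧ (∀ α ∈ v, tau α β = tau1 α) ∧ tau β δ = c := by
    rintro δ ⟨hδU, hδlam, hδF⟩
    have hδlim : IsSuccLimit δ :=
      one_lt_cof_iff.1 (one_lt_aleph0.trans_le (hκreg.aleph0_le.trans (hU1 hδU).2))
    refine exists_uniform_colour_of_le_cof hκreg hσκ hUbdd (hU1 hδU).2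
      (fun β hβ => htau β (hβ.trans hδlam) δ hδlam) fun v hvU hvκ hv => ?_
    obtain ⟨ξ, hξ, hvξ⟩ := hB2 v hvU hvκ
    exact ⟨B v ξ, (hB1 v hvU hvκ ξ hξ).1,
      witness_lt_of_forall_witnessSup_lt hBlam hUbdd hδlim hδF hvU hvκ hv hξ, hvξ⟩
  choose! tau2 htau2 htau2_spec using hcolour
  exact ⟨E, hE, tau2, htau2, fun v hvU hvκ δ hδ hv => htau2_spec δ hδ v hvU hvκ hv⟩

/-- Lemma 4.1: given `σ < κ ≤ μ < λ` with `κ, λ` regular,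
`|α|^{<κ} < λ` for `α < λ`, a colouring `τ` of pairs from `λ` by `σ`, a stationary
`U ⊆ {α < λ : cf(α) ≥ κ}`, a prediction `τ₁ : U → σ` and witnessing ordinals
`β_{v,ξ}`, there are a club `E` of `λ` and `τ₂ : U ∩ E → σ` such that below any
`δ ∈ U ∩ E` one finds `β` realizing `τ₁` on `v` and `τ₂` at `δ`. -/
theorem club_guessing_colour
    (σ κ μ lam : Cardinal.{0})
    (hσ : ℵ₀ ≤ σ) (hσκ : σ < κ) (hκμ : κ ≤ μ) (hμlam : μ < lam)
    (hκreg : κ.IsRegular) (hlamreg : lam.IsRegular)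
    (hsmall : ∀ α < lam.ord, α.card ^< κ < lam)
    (tau : Ordinal → Ordinal → Ordinal)
    (htau : ∀ α < lam.ord, ∀ β < lam.ord, tau α β < σ.ord)
    (U : Set Ordinal) (hU1 : U ⊆ {α | α < lam.ord ∧ κ ≤ α.cof})
    (hU2 : IsStationaryIn lam.ord U)
    (tau1 : Ordinal → Ordinal) (htau1 : ∀ α ∈ U, tau1 α < σ.ord)
    (B : Set Ordinal → Ordinal → Ordinal)
    (hB1 : ∀ v : Set Ordinal, v ⊆ U → #v < Cardinal.lift.{1} κ → ∀ ξ < μ.ord,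
      sSup v < B v ξ ∧ B v ξ < lam.ord)
    (hB2 : ∀ v : Set Ordinal, v ⊆ U → #v < Cardinal.lift.{1} κ →
      ∃ ξ < μ.ord, ∀ α ∈ v, tau α (B v ξ) = tau1 α) :
    ∃ E : Set Ordinal, IsClubIn lam.ord E ∧
      ∃ tau2 : Ordinal → Ordinal, (∀ δ ∈ U ∩ E, tau2 δ < σ.ord) ∧
        ∀ v : Set Ordinal, v ⊆ U → #v < Cardinal.lift.{1} κ →
          ∀ δ ∈ U ∩ E, sSup v < δ →
            ∃ β, sSup v < β ∧ β < δ ∧ (∀ α ∈ v, tau α β = tau1 α) ∧ tau β δ = tau2 δ :=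
  club_guessing_colour_general σ κ μ lam hσκ hκμ hμlam hκreg hlamreg hsmall tau htau U hU1 tau1 B
    hB1 hB2
end

section
/- Suppose σ < κ ≤ μ < λ are infinite cardinals with κ and λ regular, |α|^{<κ} < λ for every α < λ, and for every function τ : λ × λ → σ there exist a stationary set U ⊆ {α < λ : cf(α) ≥ κ}, a function τ₁ : U → σ, and a family ⟨β_{v,ξ} : v ∈ [U]^{<κ}, ξ < μ⟩ of ordinals less than λ such that sup(v) < β_{v,ξ} for all v, ξ, and for every v ∈ [U]^{<κ} there is ξ < μ with τ(α, β_{v,ξ}) = τ₁(α) for every α ∈ v. Then the principle (*)^{2,2}_{λ,σ} holds: for every function c from the 2-element subsets of λ into σ, there are a set u ⊆ σ with |u| ≤ 2 and a set S ⊆ λ of cardinality λ such that whenever α < β are both in S, there are n ≤ 2 and ordinals α = γ₀ < ⋯ < γ_n = β with c{γ_l, γ_{l+1}} ∈ u for all l < n. -/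
/-!
Colour a pair `α < β` by `τ(α, β) = c{α, β}` and take the guessing data `U, τ₁, B` for `τ`.
Pressing down `τ₁` gives a colour `i` and a stationary `S₁ ⊆ U` on which `τ₁ = i`. Below
every point `δ` of a suitable club, each `v ⊆ S₁ ∩ δ` with `|v| ≤ σ` has a guess `t = B_{v,ξ}`
below `δ`, so `c{α, t} = i` for all `α ∈ v` at once. As `cf δ ≥ κ > σ`, some colour `j` is then
good at `δ`: every `α ∈ S₁ ∩ δ` reaches `δ` through some `t` with `c{α, t} = i` and
`c{t, δ} = j`. Otherwise pick a witness `α_j` of failure for each of the `σ` colours; a single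
guess `t` for all of them contradicts the failure of `j = c{t, δ}`. Pressing down `j` on the
stationary set `S₁ ∩ club` gives `S`, with `u = {i, j}`.
-/

open Cardinal Set

universe u

theorem Cardinal.IsRegular.cof_lift_ord {lam : Cardinal.{u}} (h : lam.IsRegular) :
    (Ordinal.lift.{u + 1} lam.ord).cof = Cardinal.lift.{u + 1} lam := by
  rw [← Ordinal.lift_cof, h.cof_ord]

section ClubTransfer

variable {l : Ordinal.{u}}

theorem IsClubIn.isClub_preimage {C : Set Ordinal.{u}} (hC : IsClubIn l C) :
    IsClub ((↑) ⁻¹' C : Set (Iio l)) := by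
  refine ⟨fun d hd hne _ a ha => ?_, fun x => ?_⟩
  · have hub : ∀ y ∈ ((↑) '' d : Set Ordinal.{u}), y ≤ a := by
      rintro _ ⟨x, hx, rfl⟩
      exact ha.1 hx
    have hsup : sSup ((↑) '' d : Set Ordinal.{u}) = a := by
      refine le_antisymm (csSup_le (hne.image _) hub) (not_lt.1 fun h => h.not_ge ?_)
      exact show a ≤ ⟨_, h.trans a.2⟩ from
        ha.2 fun x hx => le_csSup ⟨a.1, hub⟩ (mem_image_of_mem _ hx)
    have := hC.2.1 _ (image_subset_iff.2 hd) (hne.image _) (hsup ▸ a.2)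
    rwa [hsup] at this
  · obtain ⟨b, hb, hxb⟩ := hC.2.2 x x.2
    exact ⟨⟨b, hC.1 hb⟩, hb, hxb.le⟩

theorem IsClub.isClubIn_image (hl : Order.IsSuccLimit l) {t : Set (Iio l)} (ht : IsClub t) :
    IsClubIn l ((↑) '' t) := by
  refine ⟨image_subset_iff.2 fun x _ => x.2, fun s hs hne hlt => ?_, fun a ha => ?_⟩
  · have hbdd : BddAbove s := ⟨l, fun y hy => by obtain ⟨x, -, rfl⟩ := hs hy; exact x.2.le⟩
    have hlub : IsLUB ((↑) ⁻¹' s : Set (Iio l)) ⟨sSup s, hlt⟩ :=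
      ⟨fun x hx => le_csSup hbdd hx, fun b hb => csSup_le hne fun y hy => by
        obtain ⟨x, -, rfl⟩ := hs hy; exact hb hy⟩
    refine ⟨_, ht.dirSupClosed (fun x hx => ?_) ?_
      (IsChain.directedOn (isChain_of_trichotomous _)) hlub, rfl⟩
    · obtain ⟨y, hy, hyx⟩ := hs hx
      rwa [← Subtype.ext hyx]
    · obtain ⟨y, hy⟩ := hne
      obtain ⟨x, -, rfl⟩ := hs hy
      exact ⟨x, hy⟩
  · obtain ⟨b, hb, hab⟩ := ht.isCofinal ⟨a + 1, hl.add_one_lt ha⟩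
    exact ⟨b, mem_image_of_mem _ hb, (Order.lt_add_one_iff.2 le_rfl).trans_le hab⟩

theorem isStationaryIn_iff_isStationary (hl : Order.IsSuccLimit l) {S : Set Ordinal.{u}} :
    IsStationaryIn l S ↔ IsStationary ((↑) ⁻¹' S : Set (Iio l)) := by
  refine ⟨fun h t ht => ?_, fun h C hC => ?_⟩
  · obtain ⟨_, hxS, x, hx, rfl⟩ := h _ (ht.isClubIn_image hl)
    exact ⟨x, hxS, hx⟩
  · obtain ⟨x, hxS, hxC⟩ := h hC.isClub_preimage
    exact ⟨x, hxS, hxC⟩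

end ClubTransfer

section Stationary

variable {lam : Cardinal.{u}}

theorem cof_Iio_ord_ne_aleph0 (hreg : lam.IsRegular) (hω : ℵ₀ < lam) :
    Order.cof (Iio lam.ord) ≠ ℵ₀ := by
  rw [Ordinal.cof_Iio, hreg.cof_lift_ord]
  simpa using hω.ne'

theorem IsStationaryIn.inter_isClubIn (hreg : lam.IsRegular) (hω : ℵ₀ < lam)
    {S C : Set Ordinal.{u}} (hS : IsStationaryIn lam.ord S) (hC : IsClubIn lam.ord C) :
    IsStationaryIn lam.ord (S ∩ C) := by
  have hl := Cardinal.isSuccLimit_ord hreg.aleph0_le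
  rw [isStationaryIn_iff_isStationary hl] at hS ⊢
  intro t ht
  simpa [inter_assoc] using hS (hC.isClub_preimage.inter (cof_Iio_ord_ne_aleph0 hreg hω) ht)

theorem IsStationaryIn.exists_isStationaryIn_fiber (hreg : lam.IsRegular) (hω : ℵ₀ < lam)
    {S : Set Ordinal.{u}} (hS : IsStationaryIn lam.ord S) {b : Ordinal.{u}} (hb : b.card < lam)
    {f : Ordinal.{u} → Ordinal.{u}} (hf : ∀ α ∈ S, f α < b) :
    ∃ j < b, IsStationaryIn lam.ord {α ∈ S | f α = j} := by
  have hl := Cardinal.isSuccLimit_ord hreg.aleph0_le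
  have hunion : ((↑) ⁻¹' S : Set (Iio lam.ord)) =
      ⋃ j : Iio b, (↑) ⁻¹' {α ∈ S | f α = j} := by
    ext x
    simpa using fun hx => hf x hx
  rw [isStationaryIn_iff_isStationary hl, hunion,
    isStationary_iUnion_iff (cof_Iio_ord_ne_aleph0 hreg hω)] at hS
  · obtain ⟨⟨j, hj⟩, hjS⟩ := hS
    exact ⟨j, hj, (isStationaryIn_iff_isStationary hl).2 hjS⟩
  · rw [Ordinal.cof_Iio, hreg.cof_lift_ord, Cardinal.mk_Iio_ordinal]
    simpa [← Ordinal.lift_card] using hb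

theorem isClubIn_Ioo {l a : Ordinal.{u}} (hl : Order.IsSuccLimit l) (ha : a < l) :
    IsClubIn l (Ioo a l) := by
  refine ⟨fun x hx => hx.2, fun s hs hne hlt => ⟨?_, hlt⟩, fun b hb => ?_⟩
  · obtain ⟨x, hx⟩ := hne
    exact (hs hx).1.trans_le (le_csSup ⟨l, fun y hy => (hs hy).2.le⟩ hx)
  · exact ⟨max a b + 1, ⟨(le_max_left a b).trans_lt (Order.lt_add_one_iff.2 le_rfl),
      hl.add_one_lt (max_lt ha hb)⟩,
      (le_max_right a b).trans_lt (Order.lt_add_one_iff.2 le_rfl)⟩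

theorem IsStationaryIn.mk_eq (hreg : lam.IsRegular) {S : Set Ordinal.{u}}
    (hS : IsStationaryIn lam.ord S) (hSlam : S ⊆ Iio lam.ord) : #S = Cardinal.lift.{u + 1} lam := by
  refine le_antisymm ((mk_le_mk_of_subset hSlam).trans_eq (by simp [Cardinal.mk_Iio_ordinal]))
    (not_lt.1 fun hlt => ?_)
  have hsup : sSup S < lam.ord := Ordinal.sSup_lt_of_lt_cof (hreg.cof_lift_ord ▸ hlt) hSlam
  obtain ⟨x, hxS, hx, -⟩ := hS _ (isClubIn_Ioo (Cardinal.isSuccLimit_ord hreg.aleph0_le) hsup)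
  exact hx.not_ge (le_csSup ⟨lam.ord, fun y hy => (hSlam hy).le⟩ hxS)

theorem isClubIn_closurePoints (hreg : lam.IsRegular) (hω : ℵ₀ < lam)
    {G : Ordinal.{u} → Ordinal.{u}} (hG : ∀ β < lam.ord, G β < lam.ord) :
    IsClubIn lam.ord {γ | γ < lam.ord ∧ ∀ β < γ, G β < γ} := by
  have hl := Cardinal.isSuccLimit_ord hreg.aleph0_le
  refine ⟨fun γ hγ => hγ.1, fun s hs hne hlt => ⟨hlt, fun β hβ => ?_⟩, fun a ha => ?_⟩
  · obtain ⟨γ, hγ, hβγ⟩ := exists_lt_of_lt_csSup hne hβ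
    exact ((hs hγ).2 β hβγ).trans_le (le_csSup ⟨lam.ord, fun y hy => (hs hy).1.le⟩ hγ)
  -- `F` strictly bounds both `G` and the identity on `[0, b]`, so `nfp F a` is a closure point.
  let F : Ordinal.{u} → Ordinal.{u} := fun b =>
    sSup ((fun β => max (G β) β + 1) '' Iio (b + 1))
  have hFgt : ∀ β b, β ≤ b → max (G β) β < F b := fun β b hβb =>
    (Order.lt_add_one_iff.2 le_rfl).trans_le
      (le_csSup Ordinal.bddAbove_of_small (mem_image_of_mem _ (Order.lt_add_one_iff.2 hβb)))
  have hFlt : ∀ b < lam.ord, F b < lam.ord := by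
    intro b hb
    refine Ordinal.sSup_lt_of_lt_cof ?_ ?_
    · rw [hreg.cof_lift_ord]
      refine mk_image_le.trans_lt ?_
      rw [Cardinal.mk_Iio_ordinal, Cardinal.lift_lt]
      exact Cardinal.lt_ord.1 (hl.add_one_lt hb)
    · rintro _ ⟨β, hβ, rfl⟩
      have hβlam : β < lam.ord := (Order.lt_add_one_iff.1 hβ).trans_lt hb
      exact hl.add_one_lt (max_lt (hG β hβlam) hβlam)
  refine ⟨Ordinal.nfp F a, ⟨Ordinal.nfp_lt_ord (by rwa [hreg.cof_ord]) hFlt ha, fun β hβ => ?_⟩,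
    ((le_max_right _ _).trans_lt (hFgt a a le_rfl)).trans_le (Ordinal.iterate_le_nfp F a 1)⟩
  obtain ⟨n, hn⟩ := Ordinal.lt_nfp_iff.1 hβ
  calc G β ≤ max (G β) β := le_max_left _ _
    _ < F (F^[n] a) := hFgt β _ hn.le
    _ ≤ Ordinal.nfp F a := by
      simpa only [Function.iterate_succ_apply'] using Ordinal.iterate_le_nfp F a (n + 1)

end Stationary

theorem Cardinal.mk_bounded_subset_lt {α : Type*} {lam σ : Cardinal} (hω : ℵ₀ < lam)
    (hpow : ∀ ν < lam, ν ^ σ < lam) {s : Set α} (hs : #s < lam) :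
    #{t : Set α // t ⊆ s ∧ #t ≤ σ} < lam :=
  (mk_bounded_subset_le s σ).trans_lt (hpow _ (max_lt hs hω))

theorem exists_isClubIn_closedUnder {lam σ μ : Cardinal.{u}} (hreg : lam.IsRegular)
    (hω : ℵ₀ < lam) (hμ : μ < lam) (hpow : ∀ ν < lam, ν ^ σ < lam) {U : Set Ordinal.{u}}
    {B : Set Ordinal.{u} → Ordinal.{u} → Ordinal.{u}}
    (hB : ∀ v ⊆ U, #v ≤ Cardinal.lift.{u + 1} σ → ∀ ξ < μ.ord, B v ξ < lam.ord) :
    ∃ C, IsClubIn lam.ord C ∧ ∀ δ ∈ C, ∀ β < δ, ∀ v ⊆ U ∩ Iic β,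
      #v ≤ Cardinal.lift.{u + 1} σ → ∀ ξ < μ.ord, B v ξ < δ := by
  have hpow' : ∀ ν < Cardinal.lift.{u + 1} lam,
      ν ^ Cardinal.lift.{u + 1} σ < Cardinal.lift.{u + 1} lam := by
    intro ν hν
    obtain ⟨ν, hνlam, rfl⟩ := Cardinal.lt_lift_iff.1 hν
    rw [← Cardinal.lift_power, Cardinal.lift_lt]
    exact hpow ν hνlam
  let W : Ordinal.{u} → Set Ordinal.{u} := fun β =>
    image2 B {v | v ⊆ U ∩ Iic β ∧ #v ≤ Cardinal.lift.{u + 1} σ} (Iio μ.ord)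
  have hW : ∀ β, W β ⊆ Iio lam.ord := by
    rintro β _ ⟨v, ⟨hv, hvσ⟩, ξ, hξ, rfl⟩
    exact hB v (hv.trans inter_subset_left) hvσ ξ hξ
  have hG : ∀ β < lam.ord, sSup (W β) < lam.ord := by
    intro β hβ
    refine Ordinal.sSup_lt_of_lt_cof ?_ (hW β)
    have hβ' : #↥(U ∩ Iic β) < Cardinal.lift.{u + 1} lam := by
      refine (mk_le_mk_of_subset (show U ∩ Iic β ⊆ Iio (β + 1) from
        fun x hx => mem_Iio.2 (Order.lt_add_one_iff.2 hx.2))).trans_lt ?_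
      rw [Cardinal.mk_Iio_ordinal, Cardinal.lift_lt]
      exact Cardinal.lt_ord.1 ((Cardinal.isSuccLimit_ord hreg.aleph0_le).add_one_lt hβ)
    rw [hreg.cof_lift_ord]
    refine mk_image2_le.trans_lt (mul_lt_of_lt (by simpa using hω.le)
      (Cardinal.mk_bounded_subset_lt (by simpa using hω) hpow' hβ') ?_)
    simpa [Cardinal.mk_Iio_ordinal] using hμ
  refine ⟨_, isClubIn_closurePoints hreg hω hG, fun δ hδ β hβ v hv hvσ ξ hξ => ?_⟩
  have hbdd : BddAbove (W β) := ⟨lam.ord, fun x hx => (hW β hx).le⟩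
  exact (le_csSup hbdd (mem_image2_of_mem ⟨hv, hvσ⟩ hξ)).trans_lt (hδ.2 β hβ)

theorem exists_isClubIn_guess {σ κ μ lam : Cardinal.{u}} (hreg : lam.IsRegular)
    (hω : ℵ₀ < lam) (hσκ : σ < κ) (hμ : μ < lam) (hpow : ∀ ν < lam, ν ^ σ < lam)
    {U : Set Ordinal.{u}}
    {tau : Ordinal.{u} → Ordinal.{u} → Ordinal.{u}} {tau1 : Ordinal.{u} → Ordinal.{u}}
    {B : Set Ordinal.{u} → Ordinal.{u} → Ordinal.{u}}
    (hB : ∀ v ⊆ U, #v < Cardinal.lift.{u + 1} κ → ∀ ξ < μ.ord, sSup v < B v ξ ∧ B v ξ < lam.ord)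
    (hguess : ∀ v ⊆ U, #v < Cardinal.lift.{u + 1} κ →
      ∃ ξ < μ.ord, ∀ α ∈ v, tau α (B v ξ) = tau1 α) :
    ∃ C, IsClubIn lam.ord C ∧ ∀ δ ∈ C, σ < δ.cof → ∀ v ⊆ U ∩ Iio δ,
      #v ≤ Cardinal.lift.{u + 1} σ → ∃ t < δ, ∀ α ∈ v, α < t ∧ tau α t = tau1 α := by
  have hσκ' : Cardinal.lift.{u + 1} σ < Cardinal.lift.{u + 1} κ := Cardinal.lift_lt.2 hσκ
  obtain ⟨C, hC, hCB⟩ := exists_isClubIn_closedUnder hreg hω hμ hpow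
    fun v hv hvσ ξ hξ => (hB v hv (hvσ.trans_lt hσκ') ξ hξ).2
  refine ⟨C, hC, fun δ hδ hσδ v hv hvσ => ?_⟩
  have hvU : v ⊆ U := hv.trans inter_subset_left
  have hbdd : BddAbove v := ⟨δ, fun x hx => (hv hx).2.le⟩
  have hsup : sSup v < δ := by
    refine Ordinal.sSup_lt_of_lt_cof ?_ fun x hx => (hv hx).2
    rw [← Ordinal.lift_cof]
    exact hvσ.trans_lt (Cardinal.lift_lt.2 hσδ)
  obtain ⟨ξ, hξ, hτ⟩ := hguess v hvU (hvσ.trans_lt hσκ')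
  have hvsup : v ⊆ U ∩ Iic (sSup v) := subset_inter hvU fun x hx => le_csSup hbdd hx
  refine ⟨B v ξ, hCB δ hδ _ hsup v hvsup hvσ ξ hξ, fun α hα => ⟨?_, hτ α hα⟩⟩
  exact (le_csSup hbdd hα).trans_lt (hB v hvU (hvσ.trans_lt hσκ') ξ hξ).1

theorem exists_colour_of_forall_guess {c : Ordinal.{u} → Ordinal.{u} → Ordinal.{u}}
    {σ : Cardinal.{u}} {S : Set Ordinal.{u}} {i δ : Ordinal.{u}}
    (hguess : ∀ v ⊆ S ∩ Iio δ, #v ≤ Cardinal.lift.{u + 1} σ → ∃ t < δ, ∀ α ∈ v, α < t ∧ c α t = i)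
    (hc : ∀ t < δ, c t δ < σ.ord) :
    ∃ j < σ.ord, ∀ α ∈ S ∩ Iio δ, ∃ t, α < t ∧ t < δ ∧ c α t = i ∧ c t δ = j := by
  by_contra! hbad
  choose! w hwS hw using hbad
  obtain ⟨t, htδ, ht⟩ := hguess (w '' Iio σ.ord) (image_subset_iff.2 hwS)
    (mk_image_le.trans (by simp [Cardinal.mk_Iio_ordinal]))
  have hj := hc t htδ
  obtain ⟨hwt, hcw⟩ := ht _ (mem_image_of_mem w hj)
  exact hw _ hj t hwt htδ hcw rfl

theorem exists_two_step_path {X Y : Type*} [Preorder X] {c : X → X → Y} {u : Set Y}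
    {α t β : X} (hαt : α < t) (htβ : t < β) (h₁ : c α t ∈ u) (h₂ : c t β ∈ u) :
    ∃ n : ℕ, n ≤ 2 ∧ ∃ γ : Fin (n + 1) → X, StrictMono γ ∧ γ 0 = α ∧ γ (Fin.last n) = β ∧
      ∀ l : Fin n, c (γ l.castSucc) (γ l.succ) ∈ u := by
  refine ⟨2, le_rfl, ![α, t, β], Fin.strictMono_iff_lt_succ.2 fun l => ?_, rfl, rfl, fun l => ?_⟩
  · fin_cases l <;> simpa
  · fin_cases l <;> simpa

theorem Cardinal.mk_pair_le_two {α : Type*} (a b : α) : #({a, b} : Set α) ≤ 2 :=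
  mk_insert_le.trans (by simp [one_add_one_eq_two])

theorem star_two_two_of_guessing_general
    (σ κ μ lam : Cardinal.{0})
    (hσ : ℵ₀ ≤ σ) (hσκ : σ < κ) (hκμ : κ ≤ μ) (hμlam : μ < lam)
    (hlamreg : lam.IsRegular)
    (hsmall : ∀ α < lam.ord, α.card ^< κ < lam)
    (hdata : ∀ tau : Ordinal → Ordinal → Ordinal,
      (∀ α < lam.ord, ∀ β < lam.ord, tau α β < σ.ord) →
      ∃ U : Set Ordinal, U ⊆ {α | α < lam.ord ∧ κ ≤ α.cof} ∧ IsStationaryIn lam.ord U ∧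
        ∃ tau1 : Ordinal → Ordinal, (∀ α ∈ U, tau1 α < σ.ord) ∧
          ∃ B : Set Ordinal → Ordinal → Ordinal,
            (∀ v : Set Ordinal, v ⊆ U → #v < Cardinal.lift.{1} κ → ∀ ξ < μ.ord,
              sSup v < B v ξ ∧ B v ξ < lam.ord) ∧
            (∀ v : Set Ordinal, v ⊆ U → #v < Cardinal.lift.{1} κ →
              ∃ ξ < μ.ord, ∀ α ∈ v, tau α (B v ξ) = tau1 α)) :
    ∀ c : Ordinal → Ordinal → Ordinal,
      (∀ α β : Ordinal, α < β → β < lam.ord → c α β < σ.ord) →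
      ∃ u : Set Ordinal, u ⊆ Set.Iio σ.ord ∧ #u ≤ 2 ∧
        ∃ S : Set Ordinal, S ⊆ Set.Iio lam.ord ∧ #S = Cardinal.lift.{1} lam ∧
          ∀ α ∈ S, ∀ β ∈ S, α < β →
            ∃ n : ℕ, n ≤ 2 ∧ ∃ γ : Fin (n + 1) → Ordinal, StrictMono γ ∧
              γ 0 = α ∧ γ (Fin.last n) = β ∧
              ∀ l : Fin n, c (γ l.castSucc) (γ l.succ) ∈ u := by
  intro c hc
  have hσlam : σ < lam := hσκ.trans_le (hκμ.trans hμlam.le)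
  have hω : ℵ₀ < lam := hσ.trans_lt hσlam
  have hσcard : σ.ord.card < lam := by simpa using hσlam
  have hpow : ∀ ν < lam, ν ^ σ < lam := fun ν hν =>
    (le_powerlt ν hσκ).trans_lt (by simpa using hsmall ν.ord (Cardinal.ord_lt_ord.2 hν))
  let tau : Ordinal → Ordinal → Ordinal := fun α β => if α < β then c α β else 0
  obtain ⟨U, hU, hUstat, tau1, htau1, B, hB, hguess⟩ := hdata tau fun α _ β hβ => by
    unfold tau
    split_ifs with h
    exacts [hc α β h hβ, Cardinal.ord_pos.2 (aleph0_pos.trans_le hσ)]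
  obtain ⟨C, hC, hCguess⟩ := exists_isClubIn_guess hlamreg hω hσκ hμlam hpow hB hguess
  obtain ⟨i, hi, hS₁⟩ := hUstat.exists_isStationaryIn_fiber hlamreg hω hσcard htau1
  set S₁ := {α ∈ U | tau1 α = i}
  have hgood : ∀ δ ∈ S₁ ∩ C, ∃ j < σ.ord, ∀ α ∈ S₁ ∩ Iio δ,
      ∃ t, α < t ∧ t < δ ∧ c α t = i ∧ c t δ = j := by
    rintro δ ⟨⟨hδU, -⟩, hδC⟩
    refine exists_colour_of_forall_guess (fun v hv hvσ => ?_) fun t ht => hc t δ ht (hU hδU).1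
    obtain ⟨t, htδ, ht⟩ := hCguess δ hδC (hσκ.trans_le (hU hδU).2) v
      (fun x hx => ⟨(hv hx).1.1, (hv hx).2⟩) hvσ
    refine ⟨t, htδ, fun α hα => ⟨(ht α hα).1, ?_⟩⟩
    simpa [tau, (ht α hα).1, (hv hα).1.2] using (ht α hα).2
  choose! j hj hjgood using hgood
  obtain ⟨j₀, hj₀, hS⟩ :=
    (hS₁.inter_isClubIn hlamreg hω hC).exists_isStationaryIn_fiber hlamreg hω hσcard hj
  have hSlam : {δ ∈ S₁ ∩ C | j δ = j₀} ⊆ Iio lam.ord := fun δ hδ => (hU hδ.1.1.1).1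
  refine ⟨{i, j₀}, insert_subset hi (singleton_subset_iff.2 hj₀), Cardinal.mk_pair_le_two i j₀,
    _, hSlam, hS.mk_eq hlamreg hSlam, fun α hα β hβ hαβ => ?_⟩
  obtain ⟨t, hαt, htβ, h₁, h₂⟩ := hjgood β hβ.1 α ⟨hα.1.1, hαβ⟩
  exact exists_two_step_path hαt htβ (by simp [h₁]) (by simp [h₂, hβ.2])

/-- Lemma 4.3: if `σ < κ ≤ μ < λ` with `κ, λ` regular, `|α|^{<κ} < λ` for
`α < λ`, and every colouring `τ : λ × λ → σ` admits data as in Lemma 4.1, then the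
principle `(*)^{2,2}_{λ,σ}` holds. -/
theorem star_two_two_of_guessing
    (σ κ μ lam : Cardinal.{0})
    (hσ : ℵ₀ ≤ σ) (hσκ : σ < κ) (hκμ : κ ≤ μ) (hμlam : μ < lam)
    (hκreg : κ.IsRegular) (hlamreg : lam.IsRegular)
    (hsmall : ∀ α < lam.ord, α.card ^< κ < lam)
    (hdata : ∀ tau : Ordinal → Ordinal → Ordinal,
      (∀ α < lam.ord, ∀ β < lam.ord, tau α β < σ.ord) →
      ∃ U : Set Ordinal, U ⊆ {α | α < lam.ord ∧ κ ≤ α.cof} ∧ IsStationaryIn lam.ord U ∧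
        ∃ tau1 : Ordinal → Ordinal, (∀ α ∈ U, tau1 α < σ.ord) ∧
          ∃ B : Set Ordinal → Ordinal → Ordinal,
            (∀ v : Set Ordinal, v ⊆ U → #v < Cardinal.lift.{1} κ → ∀ ξ < μ.ord,
              sSup v < B v ξ ∧ B v ξ < lam.ord) ∧
            (∀ v : Set Ordinal, v ⊆ U → #v < Cardinal.lift.{1} κ →
              ∃ ξ < μ.ord, ∀ α ∈ v, tau α (B v ξ) = tau1 α)) :
    ∀ c : Ordinal → Ordinal → Ordinal,
      (∀ α β : Ordinal, α < β → β < lam.ord → c α β < σ.ord) →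
      ∃ u : Set Ordinal, u ⊆ Set.Iio σ.ord ∧ #u ≤ 2 ∧
        ∃ S : Set Ordinal, S ⊆ Set.Iio lam.ord ∧ #S = Cardinal.lift.{1} lam ∧
          ∀ α ∈ S, ∀ β ∈ S, α < β →
            ∃ n : ℕ, n ≤ 2 ∧ ∃ γ : Fin (n + 1) → Ordinal, StrictMono γ ∧
              γ 0 = α ∧ γ (Fin.last n) = β ∧
              ∀ l : Fin n, c (γ l.castSucc) (γ l.succ) ∈ u :=
  star_two_two_of_guessing_general σ κ μ lam hσ hσκ hκμ hμlam hlamreg hsmall hdata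
end

section
/- Let D be a nonprincipal ultrafilter on an infinite cardinal κ and let λ be a cardinal. Assume: for every function c from the 2-element subsets of λ into D, there exist a set S ⊆ λ of cardinality λ and sets A₀, A₁ ∈ D such that whenever α < β are both in S, there is an ordinal γ with α < γ < β, c{α, γ} = A₀ and c{γ, β} = A₁. Suppose ⟨B_i : i < κ⟩ is a family of Boolean algebras such that no B_i contains a strictly increasing sequence of length λ (i.e., Depth⁺(B_i) ≤ λ for every i < κ). Then the ultraproduct B = ∏_{i<κ} B_i / D contains no strictly increasing sequence of length λ (i.e., Depth⁺(B) ≤ λ). Equivalently, there is no sequence ⟨a_α : α < λ⟩ of elements of ∏_{i<κ} B_i such that for all α < β < λ, {i < κ : a_α(i) < a_β(i)} ∈ D. -/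
open Cardinal Set

/-!
Colour a pair `x < y` of `λ` by the set of coordinates `{i | a x i < a y i} ∈ D`. The partition
hypothesis yields `S` of size `λ` and colours `A₀, A₁ ∈ D` such that any `x < y` in `S` are linked
through some `m` with colours `A₀` and `A₁`. A coordinate `i ∈ A₀ ∩ A₁` then has
`a x i < a m i < a y i`, so `a · i` is strictly increasing on `S`, which has order type at least `λ`,
contradicting `Depth⁺(B i) ≤ λ`.
-/

theorem Cardinal.nonempty_ord_toType_orderEmbedding_of_le_mk {lam : Cardinal} {β : Type*}
    [LinearOrder β] [WellFoundedLT β] (h : lam ≤ #β) : Nonempty (lam.ord.ToType ↪o β) := by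
  have hle : Ordinal.type ((· < ·) : lam.ord.ToType → lam.ord.ToType → Prop) ≤
      Ordinal.type ((· < ·) : β → β → Prop) := by
    rwa [Ordinal.type_toType, Cardinal.ord_le, Ordinal.card_type]
  obtain ⟨f⟩ := Ordinal.type_le_iff'.mp hle
  exact ⟨OrderEmbedding.ofStrictMono f fun _ _ => f.map_rel_iff.mpr⟩

theorem strictMono_eval_of_linked {T ι : Type*} [Preorder T] {P : ι → Type*}
    [∀ i, Preorder (P i)] (a : T → ∀ i, P i) {S : Set T} {A₀ A₁ : Set ι}
    (hlink : ∀ x ∈ S, ∀ y ∈ S, x < y →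
      ∃ m, {i | a x i < a m i} = A₀ ∧ {i | a m i < a y i} = A₁)
    {i : ι} (hi : i ∈ A₀ ∩ A₁) : StrictMono fun s : S => a s i := by
  intro x y hxy
  obtain ⟨m, hxm, hmy⟩ := hlink x x.2 y y.2 hxy
  have hlt₀ : i ∈ {j | a x j < a m j} := hxm.symm ▸ hi.1
  have hlt₁ : i ∈ {j | a m j < a y j} := hmy.symm ▸ hi.2
  exact lt_trans hlt₀ hlt₁

theorem depth_of_ultraproduct_general
    {ι : Type} (D : Ultrafilter ι)
    (lam : Cardinal)
    (hpart : ∀ c : lam.ord.ToType → lam.ord.ToType → Set ι,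
      (∀ a b, a < b → c a b ∈ D) →
      ∃ S : Set lam.ord.ToType, #S = lam ∧
        ∃ A₀ ∈ D, ∃ A₁ ∈ D, ∀ a ∈ S, ∀ b ∈ S, a < b →
          ∃ m, a < m ∧ m < b ∧ c a m = A₀ ∧ c m b = A₁)
    (B : ι → Type) [∀ i, BooleanAlgebra (B i)]
    (hdepth : ∀ i, ¬∃ s : lam.ord.ToType → B i, StrictMono s) :
    ¬∃ a : lam.ord.ToType → ∀ i, B i,
      ∀ x y : lam.ord.ToType, x < y → {i | a x i < a y i} ∈ D := by
  rintro ⟨a, ha⟩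
  obtain ⟨S, hS, A₀, hA₀, A₁, hA₁, hlink⟩ := hpart (fun x y => {i | a x i < a y i}) ha
  obtain ⟨i, hi⟩ := Ultrafilter.nonempty_of_mem (D.inter_mem hA₀ hA₁)
  have hmono : StrictMono fun s : S => a s i :=
    strictMono_eval_of_linked a
      (fun x hx y hy hxy => (hlink x hx y hy hxy).imp fun _ hm => hm.2.2) hi
  obtain ⟨e⟩ := Cardinal.nonempty_ord_toType_orderEmbedding_of_le_mk hS.ge
  exact hdepth i ⟨_, hmono.comp e.strictMono⟩

/-- Corollary 4.11, abstracted: if every `D`-colouring of pairs from `λ`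
admits a size-`λ` set `S` and colours `A₀, A₁ ∈ D` linking any two points of `S` through a
middle point, and each Boolean algebra `B i` has `Depth⁺ ≤ λ`, then the ultraproduct
`∏ B i / D` has `Depth⁺ ≤ λ`. -/
theorem depth_of_ultraproduct
    {ι : Type} [Infinite ι] (D : Ultrafilter ι) (hD : Nonprincipal D)
    (lam : Cardinal)
    (hpart : ∀ c : lam.ord.ToType → lam.ord.ToType → Set ι,
      (∀ a b, a < b → c a b ∈ D) →
      ∃ S : Set lam.ord.ToType, #S = lam ∧
        ∃ A₀ ∈ D, ∃ A₁ ∈ D, ∀ a ∈ S, ∀ b ∈ S, a < b →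
          ∃ m, a < m ∧ m < b ∧ c a m = A₀ ∧ c m b = A₁)
    (B : ι → Type) [∀ i, BooleanAlgebra (B i)]
    (hdepth : ∀ i, ¬∃ s : lam.ord.ToType → B i, StrictMono s) :
    ¬∃ a : lam.ord.ToType → ∀ i, B i,
      ∀ x y : lam.ord.ToType, x < y → {i | a x i < a y i} ∈ D :=
  depth_of_ultraproduct_general D lam hpart B hdepth
end

section
/- Let θ be a regular infinite cardinal, let σ = 2^{<θ} (so σ = sup{2^ν : ν < θ}), let λ be a regular cardinal with λ > σ, let U be a set, and let ⟨d_α : α < λ⟩ be a sequence of subsets of U, each of cardinality less than θ. Then there is a set u_* ⊆ U with |u_*| ≤ σ such that: whenever u is a set with u_* ⊆ u ⊆ U and |u| ≤ σ, and α < λ, there exists β with α ≤ β < λ such that d_β ∩ u ⊆ u_*. -/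
open Cardinal Set

/-! If no such `u₀` exists, every small `u₀` has a small `w u₀` whose trace on all late enough
`d β` escapes `u₀`. Iterating `w` along `θ` with unions at every stage keeps all sets of size
`≤ σ`, since `θ ≤ 2^{<θ} = σ`. As `λ > σ ≥ θ` is regular, one index `β` lies above all `θ`
thresholds, and then `d β` gains a new point at each of the `θ` stages, contradicting
`#(d β) < θ`. -/

universe u

theorem Cardinal.self_le_two_powerlt (θ : Cardinal) : θ ≤ 2 ^< θ := by
  by_contra! h
  exact (cantor _).not_ge (le_powerlt 2 h)

theorem Cardinal.mk_iUnion_le_of_le {α ι : Type u} {σ : Cardinal.{u}} (hσ : ℵ₀ ≤ σ) (hι : #ι ≤ σ)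
    (f : ι → Set α) (hf : ∀ i, #(f i) ≤ σ) : #(⋃ i, f i) ≤ σ :=
  calc #(⋃ i, f i) ≤ #ι * ⨆ i, #(f i) := mk_iUnion_le f
    _ ≤ σ * σ := mul_le_mul' hι (ciSup_le' hf)
    _ = σ := mul_eq_self hσ

theorem Order.exists_forall_le_of_mk_lt_cof {α ι : Type u} [LinearOrder α] (f : ι → α)
    (hι : #ι < Order.cof α) : ∃ b, ∀ i, f i ≤ b := by
  have : ¬ IsCofinal (range f) := fun h ↦ ((cof_le h).trans mk_range_le).not_gt hι
  simp only [IsCofinal, not_forall, not_exists, not_and, forall_mem_range, not_le] at this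
  obtain ⟨b, hb⟩ := this
  exact ⟨b, fun i ↦ (hb i).le⟩

/-- The recursion `A i = ⋃ j < i, w (A j)`; sizes stay `≤ σ` because there are at most `σ`
stages. -/
theorem exists_small_family_map_subset_of_lt {U ι : Type u} [LinearOrder ι] [WellFoundedLT ι]
    {σ : Cardinal.{u}} (hσ : ℵ₀ ≤ σ) (hι : #ι ≤ σ) (w : Set U → Set U)
    (hw : ∀ A : Set U, #A ≤ σ → #(w A) ≤ σ) :
    ∃ A : ι → Set U, (∀ i, #(A i) ≤ σ) ∧ ∀ i j, i < j → w (A i) ⊆ A j := by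
  let A : ι → Set U := WellFoundedLT.fix fun i A ↦ ⋃ j : Iio i, w (A j j.2)
  have hA : ∀ i, A i = ⋃ j : Iio i, w (A j) := WellFoundedLT.fix_eq _
  have hsmall (i : ι) : #(A i) ≤ σ := by
    induction i using WellFoundedLT.induction with
    | ind i ih =>
      rw [hA i]
      exact mk_iUnion_le_of_le hσ ((mk_subtype_le _).trans hι) _ fun j ↦ hw _ (ih j j.2)
  refine ⟨A, hsmall, fun i j hij ↦ ?_⟩
  rw [hA j]
  exact subset_iUnion_of_subset ⟨i, hij⟩ subset_rfl

/-- Picking `x i ∈ D ∩ W i \ A i` is injective: for `i < j`, `x i ∈ W i ⊆ A j ∌ x j`. -/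
theorem mk_le_of_forall_not_inter_subset {U ι : Type u} [LinearOrder ι] {A W : ι → Set U}
    (hAW : ∀ i j, i < j → W i ⊆ A j) {D : Set U} (hD : ∀ i, ¬ D ∩ W i ⊆ A i) : #ι ≤ #D := by
  choose x hx hxA using fun i ↦ not_subset.1 (hD i)
  refine mk_le_of_injective (f := fun i ↦ (⟨x i, (hx i).1⟩ : D)) ?_
  refine .of_lt_imp_ne fun i j hij h ↦ hxA j ?_
  exact Subtype.mk.inj h ▸ hAW i j hij (hx i).2

/-- Claim 5.5, abstracted: for `θ` regular, `σ = 2^{<θ}`, `λ > σ` regular,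
and a `λ`-sequence of subsets `d α ⊆ U` each of size `< θ`, there is `u₀ ⊆ U` of size
`≤ σ` such that for every `u ⊇ u₀` of size `≤ σ` and every index, some later index `b`
has `d b ∩ u ⊆ u₀`. -/
theorem delta_system_like_threshold
    (θ : Cardinal) (hθreg : θ.IsRegular)
    (σ : Cardinal) (hσ : σ = 2 ^< θ)
    (lam : Cardinal) (hlam : lam.IsRegular) (hσlam : σ < lam)
    (U : Type) (d : lam.ord.ToType → Set U) (hd : ∀ a, #(d a) < θ) :
    ∃ u₀ : Set U, #u₀ ≤ σ ∧
      ∀ u : Set U, u₀ ⊆ u → #u ≤ σ →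
        ∀ a : lam.ord.ToType, ∃ b, a ≤ b ∧ d b ∩ u ⊆ u₀ := by
  by_contra! hfail
  choose! w _ hw av hav using hfail
  have hθσ : θ ≤ σ := hσ ▸ self_le_two_powerlt θ
  obtain ⟨A, hA, hAw⟩ := exists_small_family_map_subset_of_lt (ι := θ.ord.ToType)
    (hθreg.aleph0_le.trans hθσ) (by rwa [mk_toType, card_ord]) w hw
  obtain ⟨b, hb⟩ := Order.exists_forall_le_of_mk_lt_cof (fun i ↦ av (A i) (hA i))
    (by rw [Ordinal.cof_toType, hlam.cof_ord, mk_toType, card_ord]; exact hθσ.trans_lt hσlam)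
  have hθd : #θ.ord.ToType ≤ #(d b) :=
    mk_le_of_forall_not_inter_subset hAw fun i ↦ hav (A i) (hA i) b (hb i)
  rw [mk_toType, card_ord] at hθd
  exact (hd b).not_ge hθd
end
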